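/- arXiv:1112.2120 — 2 statements merged into one kernel-verified Lean document; each statement's English description precedes it below -/
import Mathlib

section
/- For every matching M of size n, the number of unordered pairs of arcs whose openers differ by 1 equals the number of unordered pairs of arcs whose closers differ by 1 (that is, ladj(M) = radj(M)). -/
/-! ## Permutations of `{1,…,n}` encoded as functions `ℕ → ℕ` (zero outside `[1,n]`). -/

/-- `f` represents a permutation of `{1,…,n}` in one-line notation:
`f j` is the value in position `j` (for `1 ≤ j ≤ n`), and `f` is `0` elsewhere. -/
def IsPermOn (n : ℕ) (f : ℕ → ℕ) : Prop :=
  Set.BijOn f (Set.Icc 1 n) (Set.Icc 1 n) ∧ ∀ i, i ∉ Set.Icc 1 n → f i = 0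

/-- Ascent tops: values `f j` with `2 ≤ j ≤ n` and `f (j-1) < f j`. -/
def permAsc (n : ℕ) (f : ℕ → ℕ) : Set ℕ :=
  {v | ∃ j, 2 ≤ j ∧ j ≤ n ∧ f (j - 1) < f j ∧ v = f j}

/-- Short ascents (adjacencies): ascent tops with `f (j-1) + 1 = f j`. -/
def permAdjAsc (n : ℕ) (f : ℕ → ℕ) : Set ℕ :=
  {v | ∃ j, 2 ≤ j ∧ j ≤ n ∧ f (j - 1) + 1 = f j ∧ v = f j}

/-- Occurrences of the pattern `P`: ascent tops `f j` such that the value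
`f j - 1` occurs in a position greater than `j`. -/
def permP (n : ℕ) (f : ℕ → ℕ) : Set ℕ :=
  {v | ∃ j, 2 ≤ j ∧ j ≤ n ∧ f (j - 1) < f j ∧ v = f j ∧
    ∃ k, j < k ∧ k ≤ n ∧ f k = f j - 1}

/-- Occurrences of the pattern `Q`: ascent tops `f j` such that the value
`f j - 1` occurs in a position less than `j - 1`. -/
def permQ (n : ℕ) (f : ℕ → ℕ) : Set ℕ :=
  {v | ∃ j, 2 ≤ j ∧ j ≤ n ∧ f (j - 1) < f j ∧ v = f j ∧
    ∃ k, 1 ≤ k ∧ k + 1 < j ∧ f k = f j - 1}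

/-- Silly ascents: `(Asc(π) ∪ {π 1}) \ {n}`. -/
def permAscSilly (n : ℕ) (f : ℕ → ℕ) : Set ℕ :=
  (permAsc n f ∪ {f 1}) \ {n}

/-- Occurrences of the silly pattern `P`: silly ascents `a` such that the value
`a + 1` occurs to the left of the value `a`. -/
def permPSilly (n : ℕ) (f : ℕ → ℕ) : Set ℕ :=
  {a | a ∈ permAscSilly n f ∧ ∃ j k, 1 ≤ j ∧ j < k ∧ k ≤ n ∧ f j = a + 1 ∧ f k = a}

/-- Occurrences of the silly pattern `Q`: silly ascents `a` such that the value
`a + 1` occurs to the right of the value `a`. -/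
def permQSilly (n : ℕ) (f : ℕ → ℕ) : Set ℕ :=
  {a | a ∈ permAscSilly n f ∧ ∃ j k, 1 ≤ j ∧ j < k ∧ k ≤ n ∧ f j = a ∧ f k = a + 1}

/-- Right minima: values having no smaller value to their right. -/
def permRmin (n : ℕ) (f : ℕ → ℕ) : Set ℕ :=
  {v | ∃ j, 1 ≤ j ∧ j ≤ n ∧ v = f j ∧ ∀ k, j < k → k ≤ n → f j < f k}

/-- Right maxima: values having no larger value to their right. -/
def permRmax (n : ℕ) (f : ℕ → ℕ) : Set ℕ :=
  {v | ∃ j, 1 ≤ j ∧ j ≤ n ∧ v = f j ∧ ∀ k, j < k → k ≤ n → f k < f j}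

/-- The number of components of the finest decomposition of a permutation into
direct sums: the number of `k ∈ [1,n]` such that `f` maps `{1,…,k}` into itself. -/
noncomputable def permComp (n : ℕ) (f : ℕ → ℕ) : ℕ :=
  Set.ncard {k | 1 ≤ k ∧ k ≤ n ∧ ∀ i, 1 ≤ i → i ≤ k → f i ≤ k}

/-- The number of descents. -/
noncomputable def permDes (n : ℕ) (f : ℕ → ℕ) : ℕ :=
  Set.ncard {j | 2 ≤ j ∧ j ≤ n ∧ f j < f (j - 1)}

/-- Ascent bottoms: values `f j` with `1 ≤ j < n` and `f j < f (j+1)`. -/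
def permAscBottom (n : ℕ) (f : ℕ → ℕ) : Set ℕ :=
  {v | ∃ j, 1 ≤ j ∧ j + 1 ≤ n ∧ f j < f (j + 1) ∧ v = f j}

/-- Long ascent bottoms: values `f j` with `1 ≤ j < n` and `f j < f (j+1) - 1`. -/
def permAscBottomProper (n : ℕ) (f : ℕ → ℕ) : Set ℕ :=
  {v | ∃ j, 1 ≤ j ∧ j + 1 ≤ n ∧ f j + 1 < f (j + 1) ∧ v = f j}

/-! ## Matchings on `{1,…,2n}`.

The arcs are indexed `1,…,n` in increasing order of their closers; `opener i`
and `closer i` are the endpoints of the `i`-th arc (and `0` outside `[1,n]`). -/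

structure Matching (n : ℕ) where
  opener : ℕ → ℕ
  closer : ℕ → ℕ
  opener_lt_closer : ∀ i, 1 ≤ i → i ≤ n → opener i < closer i
  closer_mono : ∀ i j, 1 ≤ i → i < j → j ≤ n → closer i < closer j
  opener_mem : ∀ i, 1 ≤ i → i ≤ n → opener i ∈ Set.Icc 1 (2 * n)
  closer_mem : ∀ i, 1 ≤ i → i ≤ n → closer i ∈ Set.Icc 1 (2 * n)
  opener_inj : ∀ i j, 1 ≤ i → i ≤ n → 1 ≤ j → j ≤ n → opener i = opener j → i = j
  opener_ne_closer : ∀ i j, 1 ≤ i → i ≤ n → 1 ≤ j → j ≤ n → opener i ≠ closer j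
  cover : ∀ m ∈ Set.Icc 1 (2 * n), ∃ i, 1 ≤ i ∧ i ≤ n ∧ (opener i = m ∨ closer i = m)
  opener_eq_zero : ∀ i, i ∉ Set.Icc 1 n → opener i = 0
  closer_eq_zero : ∀ i, i ∉ Set.Icc 1 n → closer i = 0

namespace Matching

variable {n : ℕ}

/-- No left nesting: no pair of arcs `A, B` with `opener A = opener B + 1`
and `closer A < closer B`. -/
def NoLeftNesting (M : Matching n) : Prop :=
  ∀ i j, 1 ≤ i → i ≤ n → 1 ≤ j → j ≤ n →
    ¬(M.opener i = M.opener j + 1 ∧ M.closer i < M.closer j)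

/-- Right nestings, indexed by the arc with the larger closer. -/
def RneSet (M : Matching n) : Set ℕ :=
  {i | 2 ≤ i ∧ i ≤ n ∧ M.opener i < M.opener (i - 1) ∧ M.closer i = M.closer (i - 1) + 1}

/-- Right crossings, indexed by the arc with the larger closer. -/
def RcrSet (M : Matching n) : Set ℕ :=
  {i | 2 ≤ i ∧ i ≤ n ∧ M.opener (i - 1) < M.opener i ∧ M.opener i < M.closer (i - 1) ∧
    M.closer i = M.closer (i - 1) + 1}

/-- Double crossings (both left and right crossings), indexed by the right arc. -/
def LRcrSet (M : Matching n) : Set ℕ :=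
  {i | i ∈ M.RcrSet ∧ M.opener i = M.opener (i - 1) + 1}

/-- Right single crossings. -/
def RcrpSet (M : Matching n) : Set ℕ := M.RcrSet \ M.LRcrSet

/-- Right adjacencies, indexed by the arc with the larger closer. -/
def RadjSet (M : Matching n) : Set ℕ :=
  {i | 2 ≤ i ∧ i ≤ n ∧ M.closer i = M.closer (i - 1) + 1}

/-- Left crossings, indexed by the arc with the smaller opener. -/
def LcrSet (M : Matching n) : Set ℕ :=
  {i | 1 ≤ i ∧ i ≤ n ∧ ∃ j, 1 ≤ j ∧ j ≤ n ∧ M.opener j = M.opener i + 1 ∧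
    M.opener j < M.closer i ∧ M.closer i < M.closer j}

/-- `Min(M)`: arcs whose opener lies to the left of the first closer. -/
def MinSet (M : Matching n) : Set ℕ :=
  {i | 1 ≤ i ∧ i ≤ n ∧ M.opener i < M.closer 1}

/-- The number of components of the finest decomposition of `M` into direct sums:
the number of `k ∈ [1,n]` such that `{1,…,2k}` is a union of arcs. -/
noncomputable def comp (M : Matching n) : ℕ :=
  Set.ncard {k | 1 ≤ k ∧ k ≤ n ∧
    ∀ i, 1 ≤ i → i ≤ n → (M.closer i ≤ 2 * k ∨ 2 * k < M.opener i)}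

/-- `S` is the direct sum of `M` (size `n₁`) and `M'` (size `n₂`): the diagrams
side by side, the elements of `M'` shifted by `2 n₁`. -/
def IsDsum {n₁ n₂ m : ℕ} (M : Matching n₁) (M' : Matching n₂) (S : Matching m) : Prop :=
  m = n₁ + n₂ ∧
  (∀ i, 1 ≤ i → i ≤ n₁ → S.opener i = M.opener i ∧ S.closer i = M.closer i) ∧
  (∀ i, 1 ≤ i → i ≤ n₂ → S.opener (n₁ + i) = M'.opener i + 2 * n₁ ∧
    S.closer (n₁ + i) = M'.closer i + 2 * n₁)

end Matching

/-! ## 0-1-fillings of partition shapes.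

The shape has `len ≥ 1` columns; column `i` (for `1 ≤ i ≤ len`) has height
`shape i ≥ 1`, weakly increasing from left to right (and `shape i = 0` outside
`[1, len]`).  The dots are the cells holding a `1`. -/

structure Filling where
  len : ℕ
  shape : ℕ → ℕ
  dots : Set (ℕ × ℕ)
  len_pos : 1 ≤ len
  shape_pos : ∀ i, 1 ≤ i → i ≤ len → 1 ≤ shape i
  shape_mono : ∀ i j, 1 ≤ i → i ≤ j → j ≤ len → shape i ≤ shape j
  shape_eq_zero : ∀ i, i ∉ Set.Icc 1 len → shape i = 0
  dots_mem : ∀ p ∈ dots, 1 ≤ p.1 ∧ p.1 ≤ len ∧ 1 ≤ p.2 ∧ p.2 ≤ shape p.1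

namespace Filling

/-- The number of dots of a filling. -/
noncomputable def nDots (T : Filling) : ℕ := Set.ncard T.dots

/-- Every column contains exactly one dot. -/
def ColumnStrict (T : Filling) : Prop :=
  ∀ i, 1 ≤ i → i ≤ T.len → ∃! j, (i, j) ∈ T.dots

/-- Every column contains at least one dot. -/
def ColumnPositive (T : Filling) : Prop :=
  ∀ i, 1 ≤ i → i ≤ T.len → ∃ j, (i, j) ∈ T.dots

/-- The length of row `j`: the number of columns of height at least `j`. -/
noncomputable def rowLen (T : Filling) (j : ℕ) : ℕ :=
  Set.ncard {i | 1 ≤ i ∧ i ≤ T.len ∧ j ≤ T.shape i}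

/-- A shape is flat if its nonempty rows have pairwise distinct lengths. -/
def Flat (T : Filling) : Prop :=
  ∀ j j', 1 ≤ j → 1 ≤ j' → j ≠ j' → 1 ≤ T.rowLen j → 1 ≤ T.rowLen j' →
    T.rowLen j ≠ T.rowLen j'

/-- A staircase shape: `shape = (1, 2, …, len)`. -/
def Staircase (T : Filling) : Prop :=
  ∀ i, 1 ≤ i → i ≤ T.len → T.shape i = i

/-- The lazy set `X(T)`: columns having the same height as their left neighbour. -/
def lazySet (T : Filling) : Set ℕ :=
  {i | 2 ≤ i ∧ i ≤ T.len ∧ T.shape (i - 1) = T.shape i}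

/-- Descents of a column-strict filling: columns whose dot is strictly lower
than the dot of the previous column. -/
def DesSet (T : Filling) : Set ℕ :=
  {i | 2 ≤ i ∧ i ≤ T.len ∧ ∃ j j', (i - 1, j) ∈ T.dots ∧ (i, j') ∈ T.dots ∧ j' < j}

/-- Ascents of a column-strict filling. -/
def AscSet (T : Filling) : Set ℕ :=
  {i | 2 ≤ i ∧ i ≤ T.len ∧ ∃ j j', (i - 1, j) ∈ T.dots ∧ (i, j') ∈ T.dots ∧ j < j'}

/-- Repetitions of a column-strict filling. -/
def RepSet (T : Filling) : Set ℕ :=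
  {i | 2 ≤ i ∧ i ≤ T.len ∧ ∃ j, (i - 1, j) ∈ T.dots ∧ (i, j) ∈ T.dots}

/-- Columns with a dot in their topmost cell. -/
def MaxSet (T : Filling) : Set ℕ :=
  {i | 1 ≤ i ∧ i ≤ T.len ∧ (i, T.shape i) ∈ T.dots}

/-- Columns with a dot on the bottom row. -/
def MinSet (T : Filling) : Set ℕ :=
  {i | 1 ≤ i ∧ i ≤ T.len ∧ (i, 1) ∈ T.dots}

/-- For a column-strict filling: columns whose dot is strictly closer to the top
of its column than is any dot strictly to the right. -/
def RmaxColSet (T : Filling) : Set ℕ :=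
  {i | ∃ j, (i, j) ∈ T.dots ∧
    ∀ i' j', (i', j') ∈ T.dots → i < i' → T.shape i - j < T.shape i' - j'}

/-- `rmax(T)`: the number of dots strictly closer to the top of their column
than is any dot strictly to the right. -/
noncomputable def rmaxDots (T : Filling) : ℕ :=
  Set.ncard {p | p ∈ T.dots ∧
    ∀ q ∈ T.dots, p.1 < q.1 → T.shape p.1 - p.2 < T.shape q.1 - q.2}

/-- `lmin(T)`: the number of dots strictly to the left of any dot strictly below. -/
noncomputable def lminDots (T : Filling) : ℕ :=
  Set.ncard {p | p ∈ T.dots ∧ ∀ q ∈ T.dots, q.2 < p.2 → p.1 < q.1}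

/-- The number of components of the finest decomposition of `T` into direct sums:
the number of columns `k` after which the filling can be cut. -/
noncomputable def comp (T : Filling) : ℕ :=
  Set.ncard {k | 1 ≤ k ∧ k ≤ T.len ∧ (k = T.len ∨ T.shape k < T.shape (k + 1)) ∧
    ∀ p ∈ T.dots, k < p.1 → T.shape k < p.2}

/-- `S = T ⊕ T'`: `T'` is placed strictly to the north-east of `T`, the
rectangle below `T'` being filled with empty cells. -/
def IsDsum (T T' S : Filling) : Prop :=
  S.len = T.len + T'.len ∧
  (∀ i, 1 ≤ i → i ≤ T.len → S.shape i = T.shape i) ∧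
  (∀ i, 1 ≤ i → i ≤ T'.len → S.shape (T.len + i) = T.shape T.len + T'.shape i) ∧
  S.dots = T.dots ∪ (fun p : ℕ × ℕ => (p.1 + T.len, p.2 + T.shape T.len)) '' T'.dots

/-- A square shape. -/
def Square (T : Filling) : Prop :=
  ∀ i, 1 ≤ i → i ≤ T.len → T.shape i = T.len

/-- Enriched permutation filling: a positive filling of a square shape in which
a dot is the leftmost dot of its row iff it is the topmost dot of its column. -/
def Enriched (T : Filling) : Prop :=
  T.Square ∧
  (∀ i, 1 ≤ i → i ≤ T.len → ∃ j, (i, j) ∈ T.dots) ∧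
  (∀ j, 1 ≤ j → j ≤ T.len → ∃ i, (i, j) ∈ T.dots) ∧
  (∀ p ∈ T.dots,
    ((∀ q ∈ T.dots, q.2 = p.2 → p.1 ≤ q.1) ↔ (∀ q ∈ T.dots, q.1 = p.1 → q.2 ≤ p.2)))

/-- `S = R ⊞ R'`: boxed sum of enriched permutation fillings. -/
def IsBoxSum (R R' S : Filling) : Prop :=
  S.len = R.len + R'.len ∧
  (∀ i, 1 ≤ i → i ≤ S.len → S.shape i = S.len) ∧
  S.dots = R.dots ∪ (fun p : ℕ × ℕ => (p.1 + R.len, p.2 + R.len)) '' R'.dots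

/-- The number of components of the finest decomposition into boxed sums. -/
noncomputable def boxcomp (T : Filling) : ℕ :=
  Set.ncard {k | 1 ≤ k ∧ k ≤ T.len ∧
    ∀ p ∈ T.dots, (p.1 ≤ k ∧ p.2 ≤ k) ∨ (k < p.1 ∧ k < p.2)}

end Filling

/-! ## Barred permutations, hatted permutations and marked matchings. -/

/-- A barred permutation: a permutation of `{1,…,n}` together with a set of
barred ascent tops. -/
structure BarredPerm where
  n : ℕ
  toFun : ℕ → ℕ
  X : Set ℕ
  n_pos : 1 ≤ n
  isPerm : IsPermOn n toFun
  X_subset : X ⊆ permAsc n toFun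

/-- Direct sum of barred permutations. -/
def BarredPerm.IsDsum (B B' C : BarredPerm) : Prop :=
  C.n = B.n + B'.n ∧
  (∀ i, C.toFun i = if i ≤ B.n then B.toFun i
    else if i ≤ B.n + B'.n then B'.toFun (i - B.n) + B.n else 0) ∧
  C.X = B.X ∪ (fun a => a + B.n) '' B'.X

/-- A hatted permutation: a permutation of `{1,…,n}` together with a set of
hatted silly ascents. -/
structure HattedPerm where
  n : ℕ
  toFun : ℕ → ℕ
  X : Set ℕ
  n_pos : 1 ≤ n
  isPerm : IsPermOn n toFun
  X_subset : X ⊆ permAscSilly n toFun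

/-- Direct sum of hatted permutations. -/
def HattedPerm.IsDsum (B B' C : HattedPerm) : Prop :=
  C.n = B.n + B'.n ∧
  (∀ i, C.toFun i = if i ≤ B.n then B.toFun i
    else if i ≤ B.n + B'.n then B'.toFun (i - B.n) + B.n else 0) ∧
  C.X = B.X ∪ (fun a => a + B.n) '' B'.X

/-- A marked matching: a matching without left nestings together with a set of
marked right adjacencies. -/
structure MarkedMatching where
  n : ℕ
  n_pos : 1 ≤ n
  M : Matching n
  noLeftNesting : M.NoLeftNesting
  X : Set ℕ
  X_subset : X ⊆ M.RadjSet

/-- Direct sum of marked matchings. -/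
def MarkedMatching.IsDsum (A B C : MarkedMatching) : Prop :=
  Matching.IsDsum A.M B.M C.M ∧ C.X = A.X ∪ (fun a => a + A.n) '' B.X

/-! The openers `O` and the closers `C` of a matching partition `{1,…,2n}`,
and `2n` is a closer while `1` is an opener. Classify the consecutive pairs `(m, m + 1)`
by the types of their two entries. Counting by the left entry gives `#O = OO + OC`,
counting by the right entry gives `#C = OC + CC`, and `#O = #C = n` forces `OO = CC`. -/

open Finset

namespace Finset

variable {O C : Finset ℕ}

theorem card_eq_card_filter_succ_mem_add_of_forall_succ_mem (hOC : Disjoint O C)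
    (hsucc : ∀ m ∈ O, m + 1 ∈ O ∪ C) :
    #O = #{m ∈ O | m + 1 ∈ O} + #{m ∈ O | m + 1 ∈ C} := by
  have hnot : {m ∈ O | m + 1 ∈ C} = {m ∈ O | m + 1 ∉ O} := by
    refine filter_congr fun m hm => ⟨fun h hO => disjoint_left.mp hOC hO h, fun h => ?_⟩
    simpa [h] using hsucc m hm
  rw [eq_comm, hnot, card_filter_add_card_filter_not]

theorem card_eq_card_filter_succ_mem_add_of_forall_exists_succ_eq (hOC : Disjoint O C)
    (hpred : ∀ c ∈ C, ∃ m ∈ O ∪ C, m + 1 = c) :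
    #C = #{m ∈ O | m + 1 ∈ C} + #{m ∈ C | m + 1 ∈ C} := by
  rw [eq_comm, ← card_union_of_disjoint (disjoint_filter_filter hOC), ← filter_union]
  refine card_nbij (· + 1) (fun m hm => (mem_filter.mp hm).2)
    (fun a _ b _ h => Nat.succ_injective h) fun c hc => ?_
  obtain ⟨m, hm, rfl⟩ := hpred c hc
  exact ⟨m, mem_filter.mpr ⟨hm, hc⟩, rfl⟩

theorem card_filter_succ_mem_eq (hOC : Disjoint O C) (hsucc : ∀ m ∈ O, m + 1 ∈ O ∪ C)
    (hpred : ∀ c ∈ C, ∃ m ∈ O ∪ C, m + 1 = c) (hcard : #O = #C) :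
    #{m ∈ O | m + 1 ∈ O} = #{m ∈ C | m + 1 ∈ C} := by
  have hO := card_eq_card_filter_succ_mem_add_of_forall_succ_mem hOC hsucc
  have hC := card_eq_card_filter_succ_mem_add_of_forall_exists_succ_eq hOC hpred
  omega

end Finset

theorem ncard_succ_pairs_eq_card_filter {n : ℕ} {f : ℕ → ℕ} (hf : Set.InjOn f (Set.Icc 1 n)) :
    Set.ncard {p : ℕ × ℕ | 1 ≤ p.1 ∧ p.1 ≤ n ∧ 1 ≤ p.2 ∧ p.2 ≤ n ∧ f p.2 = f p.1 + 1} =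
      #{m ∈ (Icc 1 n).image f | m + 1 ∈ (Icc 1 n).image f} := by
  rw [← Set.ncard_coe_finset]
  refine Set.ncard_congr (fun p _ => f p.1) ?_ ?_ ?_
  · rintro ⟨i, j⟩ ⟨hi₁, hi₂, hj₁, hj₂, hij⟩
    simp only [coe_filter, mem_image, mem_Icc, Set.mem_ofPred_eq]
    exact ⟨⟨i, ⟨hi₁, hi₂⟩, rfl⟩, j, ⟨hj₁, hj₂⟩, hij⟩
  · rintro ⟨i, j⟩ ⟨i', j'⟩ ⟨hi₁, hi₂, hj₁, hj₂, hij⟩ ⟨hi₁', hi₂', hj₁', hj₂', hij'⟩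
      (h : f i = f i')
    dsimp only at hij hij'
    obtain rfl := hf ⟨hi₁, hi₂⟩ ⟨hi₁', hi₂'⟩ h
    obtain rfl := hf ⟨hj₁, hj₂⟩ ⟨hj₁', hj₂'⟩ (hij.trans hij'.symm)
    rfl
  · intro m hm
    simp only [coe_filter, mem_image, mem_Icc, Set.mem_ofPred_eq] at hm
    obtain ⟨⟨i, ⟨hi₁, hi₂⟩, rfl⟩, j, ⟨hj₁, hj₂⟩, hij⟩ := hm
    exact ⟨(i, j), ⟨hi₁, hi₂, hj₁, hj₂, hij⟩, rfl⟩

namespace Matching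

variable {n : ℕ} (M : Matching n)

def openers : Finset ℕ := (Icc 1 n).image M.opener

def closers : Finset ℕ := (Icc 1 n).image M.closer

theorem opener_injOn : Set.InjOn M.opener (Set.Icc 1 n) :=
  fun i hi j hj h => M.opener_inj i j hi.1 hi.2 hj.1 hj.2 h

theorem closer_strictMonoOn : StrictMonoOn M.closer (Set.Icc 1 n) :=
  fun i hi j hj h => M.closer_mono i j hi.1 h hj.2

theorem card_openers : #M.openers = n := by
  rw [openers, card_image_of_injOn (by simpa using M.opener_injOn), Nat.card_Icc,
    Nat.add_sub_cancel]

theorem card_closers : #M.closers = n := by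
  rw [closers, card_image_of_injOn (by simpa using M.closer_strictMonoOn.injOn),
    Nat.card_Icc, Nat.add_sub_cancel]

theorem disjoint_openers_closers : Disjoint M.openers M.closers := by
  simp only [openers, closers, disjoint_left, mem_image, mem_Icc, not_exists, not_and]
  rintro _ ⟨i, ⟨hi₁, hi₂⟩, rfl⟩ j ⟨hj₁, hj₂⟩ h
  exact M.opener_ne_closer i j hi₁ hi₂ hj₁ hj₂ h.symm

theorem mem_openers_union_closers {m : ℕ} (h₁ : 1 ≤ m) (h₂ : m ≤ 2 * n) :
    m ∈ M.openers ∪ M.closers := by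
  obtain ⟨i, hi₁, hi₂, h | h⟩ := M.cover m ⟨h₁, h₂⟩
  · exact mem_union_left _ (mem_image.mpr ⟨i, mem_Icc.mpr ⟨hi₁, hi₂⟩, h⟩)
  · exact mem_union_right _ (mem_image.mpr ⟨i, mem_Icc.mpr ⟨hi₁, hi₂⟩, h⟩)

theorem succ_mem_of_mem_openers {m : ℕ} (hm : m ∈ M.openers) :
    m + 1 ∈ M.openers ∪ M.closers := by
  obtain ⟨i, hi, rfl⟩ := mem_image.mp hm
  obtain ⟨hi₁, hi₂⟩ := mem_Icc.mp hi
  have hlt := M.opener_lt_closer i hi₁ hi₂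
  have hc := M.closer_mem i hi₁ hi₂
  exact M.mem_openers_union_closers (by omega) (by simp only [Set.mem_Icc] at hc; omega)

theorem exists_succ_eq_of_mem_closers {c : ℕ} (hc : c ∈ M.closers) :
    ∃ m ∈ M.openers ∪ M.closers, m + 1 = c := by
  obtain ⟨i, hi, rfl⟩ := mem_image.mp hc
  obtain ⟨hi₁, hi₂⟩ := mem_Icc.mp hi
  have hlt := M.opener_lt_closer i hi₁ hi₂
  have ho := M.opener_mem i hi₁ hi₂
  have hc := M.closer_mem i hi₁ hi₂
  simp only [Set.mem_Icc] at ho hc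
  exact ⟨M.closer i - 1, M.mem_openers_union_closers (by omega) (by omega), by omega⟩

end Matching

/-- In any matching, the number of (unordered) pairs of arcs
whose openers differ by 1 equals the number of pairs of arcs whose closers
differ by 1 (`ladj(M) = radj(M)`); each unordered pair is recorded by the
ordered pair in the `+1` direction. -/
theorem ladj_eq_radj (n : ℕ) (M : Matching n) :
    Set.ncard {p : ℕ × ℕ | 1 ≤ p.1 ∧ p.1 ≤ n ∧ 1 ≤ p.2 ∧ p.2 ≤ n ∧
        M.opener p.2 = M.opener p.1 + 1} =
      Set.ncard {p : ℕ × ℕ | 1 ≤ p.1 ∧ p.1 ≤ n ∧ 1 ≤ p.2 ∧ p.2 ≤ n ∧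
        M.closer p.2 = M.closer p.1 + 1} := by
  rw [ncard_succ_pairs_eq_card_filter M.opener_injOn,
    ncard_succ_pairs_eq_card_filter M.closer_strictMonoOn.injOn]
  exact card_filter_succ_mem_eq M.disjoint_openers_closers (fun _ => M.succ_mem_of_mem_openers)
    (fun _ => M.exists_succ_eq_of_mem_closers) (M.card_openers.trans M.card_closers.symm)
end

section
/- For every n ≥ 1 and all disjoint subsets A, B of {1,…,n}: #{π ∈ S_n : Ascbottomproper(π) = A and {a−1 : a ∈ adjAsc(π)} = B} = #{M ∈ N_n : Lcr(M) ∖ {i−1 : i ∈ LRcr(M)} = A and {i−1 : i ∈ LRcr(M)} = B}. -/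
/-!
Both sides satisfy the recurrence `recStep` in the size, take the same value at size `1` and
vanish outside the `Admissible` range, so they agree.

Deleting the value `m + 1` from a permutation of size `m + 1` leaves a permutation `g` of size
`m` and the value `x` that preceded `m + 1` (`x = 0` if it stood in front). Only the ascent at
`x` changes: `x` becomes a long ascent bottom if `1 ≤ x < m`, stops being a short ascent bottom,
and is a new short ascent bottom if `x = m`.

Deleting the last arc of a matching without left nesting of size `m + 1` leaves such a matching
of size `m`. The deleted opener was followed by a closer, and preceded either by the opener of an
arc `x` that is not a left crossing, or by the closer of an arc `y` followed by a closer (or by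
the last closer, `y = m`). An `x` becomes a left crossing (and a shifted double crossing if
`x = m`); a `y` stops being a shifted double crossing. A matching of size `m` with statistics
`(A, B)` has `#A + 1` labels `y ∉ B`, because the arcs whose closer follows a closer are as many
as the left crossings; collecting terms gives `recStep` again.
-/

set_option autoImplicit false

section Counting

variable {α β ι : Type*}

lemma finite_setOf_bounded_support (N K : ℕ) :
    {f : ℕ → ℕ | (∀ i, f i ≤ K) ∧ ∀ i, N < i → f i = 0}.Finite := by
  refine (Set.finite_range fun (v : Fin (N + 1) → Fin (K + 1)) (i : ℕ) =>
    if h : i < N + 1 then (v ⟨i, h⟩ : ℕ) else 0).subset ?_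
  rintro f ⟨hK, hN⟩
  refine ⟨fun i => ⟨f i, Nat.lt_succ_of_le (hK i)⟩, funext fun i => ?_⟩
  by_cases hi : i < N + 1
  · simp [hi]
  · simp [hi, hN i (by omega)]

lemma ncard_eq_sum_ncard_of_insertion {T : Set β} (F : Finset ι) (U : ι → Set α)
    (ins : ι → α → β) (hU : ∀ ℓ ∈ F, (U ℓ).Finite)
    (hinj : ∀ ℓ ∈ F, ∀ ℓ' ∈ F, ∀ a ∈ U ℓ, ∀ a' ∈ U ℓ', ins ℓ a = ins ℓ' a' → ℓ = ℓ' ∧ a = a')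
    (hsurj : ∀ b ∈ T, ∃ ℓ ∈ F, ∃ a ∈ U ℓ, ins ℓ a = b) :
    T.ncard = ∑ ℓ ∈ F, {a | a ∈ U ℓ ∧ ins ℓ a ∈ T}.ncard := by
  have hT : T = ⋃ ℓ ∈ (F : Set ι), ins ℓ '' {a | a ∈ U ℓ ∧ ins ℓ a ∈ T} := by
    ext b
    simp only [Set.mem_iUnion, Set.mem_image, Set.mem_ofPred_eq, Finset.mem_coe]
    constructor
    · intro hb
      obtain ⟨ℓ, hℓ, a, ha, rfl⟩ := hsurj b hb
      exact ⟨ℓ, hℓ, a, ⟨ha, hb⟩, rfl⟩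
    · rintro ⟨ℓ, -, a, ⟨-, hb⟩, rfl⟩
      exact hb
  have hdisj : (F : Set ι).PairwiseDisjoint fun ℓ => ins ℓ '' {a | a ∈ U ℓ ∧ ins ℓ a ∈ T} := by
    intro ℓ hℓ ℓ' hℓ' hne
    refine Set.disjoint_left.mpr ?_
    rintro _ ⟨a, ⟨ha, -⟩, rfl⟩ ⟨a', ⟨ha', -⟩, he⟩
    exact hne (hinj ℓ' hℓ' ℓ hℓ a' ha' a ha he).1.symm
  nth_rewrite 1 [hT]
  rw [Set.Finite.ncard_biUnion F.finite_toSet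
    (fun ℓ hℓ => ((hU ℓ hℓ).subset fun a ha => ha.1).image _) hdisj, finsum_mem_coe_finset]
  refine Finset.sum_congr rfl fun ℓ hℓ => Set.InjOn.ncard_image ?_
  exact fun a ha a' ha' he => (hinj ℓ hℓ ℓ hℓ a ha.1 a' ha'.1 he).2

open Classical in
lemma sum_ite_mem_eq_ncard_mul {F : Finset α} {A : Set α} (hA : A ⊆ F) (c : ℕ) :
    ∑ x ∈ F, (if x ∈ A then c else 0) = A.ncard * c := by
  rw [← Finset.sum_filter, Finset.sum_const, smul_eq_mul, ← Set.ncard_coe_finset]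
  congr 2
  ext x
  simpa using fun hx => hA hx

open Classical in
lemma sum_ncard_setOf_mem_eq_mul {C : Set α} (hC : C.Finite) {F : Finset β} {R : α → Set β}
    (hR : ∀ a ∈ C, R a ⊆ F) {k : ℕ} (hk : ∀ a ∈ C, (R a).ncard = k) :
    ∑ y ∈ F, {a | a ∈ C ∧ y ∈ R a}.ncard = k * C.ncard := by
  calc ∑ y ∈ F, {a | a ∈ C ∧ y ∈ R a}.ncard
      = ∑ y ∈ F, ∑ a ∈ hC.toFinset, if y ∈ R a then 1 else 0 := by
        refine Finset.sum_congr rfl fun y _ => ?_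
        rw [Finset.sum_boole, ← Set.ncard_coe_finset]
        congr 1
        ext a
        simp
    _ = ∑ a ∈ hC.toFinset, ∑ y ∈ F, if y ∈ R a then 1 else 0 := Finset.sum_comm
    _ = ∑ a ∈ hC.toFinset, k := by
        refine Finset.sum_congr rfl fun a ha => ?_
        rw [hC.mem_toFinset] at ha
        rw [sum_ite_mem_eq_ncard_mul (hR a ha), mul_one, hk a ha]
    _ = k * C.ncard := by rw [Finset.sum_const, smul_eq_mul, Set.ncard_eq_toFinset_card C hC,
        mul_comm]

end Counting

section SetAlgebra

variable {α : Type*} {x : α} {A B A' B' L S : Set α}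

lemma insert_eq_iff_of_notMem (hx : x ∉ A') : insert x A' = A ↔ x ∈ A ∧ A' = A \ {x} := by
  constructor
  · rintro rfl
    exact ⟨Set.mem_insert x A', (Set.insert_sdiff_self_of_notMem hx).symm⟩
  · rintro ⟨hxA, rfl⟩
    exact Set.insert_sdiff_self_of_mem hxA

lemma insert_eq_and_sdiff_singleton_eq_iff (h' : Disjoint A' B') (hx : x ∉ B) :
    insert x A' = A ∧ B' \ {x} = B ↔
      x ∈ A ∧ (A' = A ∧ B' = B ∨ A' = A \ {x} ∧ B' = B ∨ A' = A \ {x} ∧ B' = insert x B) := by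
  simp only [Set.ext_iff, Set.disjoint_left, Set.mem_sdiff, Set.mem_singleton_iff,
    Set.mem_insert_iff] at *
  grind

lemma notMem_and_insert_sdiff_eq_and_iff (hSL : S ⊆ L) :
    x ∉ L ∧ insert x L \ S = A ∧ S = B ↔ x ∈ A ∧ x ∉ B ∧ L \ S = A \ {x} ∧ S = B := by
  simp only [Set.ext_iff, Set.subset_def, Set.mem_sdiff, Set.mem_singleton_iff,
    Set.mem_insert_iff] at *
  grind

lemma insert_sdiff_insert_eq_and_iff (hSL : S ⊆ L) (hxL : x ∉ L) :
    insert x L \ insert x S = A ∧ insert x S = B ↔ x ∈ B ∧ L \ S = A ∧ S = B \ {x} := by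
  simp only [Set.ext_iff, Set.subset_def, Set.mem_sdiff, Set.mem_singleton_iff,
    Set.mem_insert_iff] at *
  grind

lemma sdiff_sdiff_singleton_eq_and_iff (hSL : S ⊆ L) :
    L \ (S \ {x}) = A ∧ S \ {x} = B ↔
      (x ∈ A ∧ x ∉ B ∧ L \ S = A \ {x} ∧ S = insert x B) ∨ (L \ S = A ∧ S = B ∧ x ∉ B) := by
  simp only [Set.ext_iff, Set.subset_def, Set.mem_sdiff, Set.mem_singleton_iff,
    Set.mem_insert_iff] at *
  grind

end SetAlgebra

section Recurrence

def Admissible (n : ℕ) (A B : Set ℕ) : Prop :=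
  (∀ a ∈ A, 1 ≤ a ∧ a + 2 ≤ n) ∧ (∀ b ∈ B, 1 ≤ b ∧ b + 1 ≤ n) ∧ Disjoint A B

lemma Admissible.eq_empty_of_one {A B : Set ℕ} (h : Admissible 1 A B) : A = ∅ ∧ B = ∅ := by
  refine ⟨Set.eq_empty_of_forall_notMem fun a ha => ?_,
    Set.eq_empty_of_forall_notMem fun b hb => ?_⟩
  · have := h.1 a ha; omega
  · have := h.2.1 b hb; omega

open Classical in
noncomputable def recStep (c : Set ℕ → Set ℕ → ℕ) (m : ℕ) (A B : Set ℕ) : ℕ :=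
  c A B + (if m ∈ B then c A (B \ {m}) else 0) +
    ∑ x ∈ Finset.Ico 1 m, if x ∈ A then c A B + c (A \ {x}) B + c (A \ {x}) (insert x B) else 0

theorem eq_of_recStep {c d : ℕ → Set ℕ → Set ℕ → ℕ}
    (hc₀ : ∀ n A B, ¬ Admissible n A B → c n A B = 0)
    (hd₀ : ∀ n A B, ¬ Admissible n A B → d n A B = 0)
    (hc : ∀ m, 1 ≤ m → ∀ A B, Admissible (m + 1) A B → c (m + 1) A B = recStep (c m) m A B)
    (hd : ∀ m, 1 ≤ m → ∀ A B, Admissible (m + 1) A B → d (m + 1) A B = recStep (d m) m A B)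
    (h₁ : c 1 ∅ ∅ = d 1 ∅ ∅) :
    ∀ n, 1 ≤ n → c n = d n := by
  intro n hn
  induction n, hn using Nat.le_induction with
  | base =>
    funext A B
    by_cases hAB : Admissible 1 A B
    · obtain ⟨rfl, rfl⟩ := hAB.eq_empty_of_one
      exact h₁
    · rw [hc₀ 1 A B hAB, hd₀ 1 A B hAB]
  | succ m hm ih =>
    funext A B
    by_cases hAB : Admissible (m + 1) A B
    · rw [hc m hm A B hAB, hd m hm A B hAB, ih]
    · rw [hc₀ _ A B hAB, hd₀ _ A B hAB]

end Recurrence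

namespace Nat

def succAbove (o q : ℕ) : ℕ := if q < o then q else q + 1

def predAbove (o q : ℕ) : ℕ := if q < o then q else q - 1

variable {o a b : ℕ}

lemma succAbove_lt_succAbove_iff : o.succAbove a < o.succAbove b ↔ a < b := by
  unfold succAbove; split_ifs <;> omega

lemma succAbove_injective (h : o.succAbove a = o.succAbove b) : a = b := by
  unfold succAbove at h; split_ifs at h <;> omega

lemma succAbove_ne : o.succAbove a ≠ o := by
  unfold succAbove; split_ifs <;> omega

lemma succAbove_bounds : a ≤ o.succAbove a ∧ o.succAbove a ≤ a + 1 := by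
  unfold succAbove; split_ifs <;> omega

lemma succAbove_of_lt (h : a < o) : o.succAbove a = a := if_pos h

lemma succAbove_of_le (h : o ≤ a) : o.succAbove a = a + 1 := if_neg (by omega)

lemma predAbove_succAbove : o.predAbove (o.succAbove a) = a := by
  unfold succAbove predAbove; split_ifs <;> omega

lemma succAbove_predAbove (h : a ≠ o) : o.succAbove (o.predAbove a) = a := by
  unfold succAbove predAbove; split_ifs <;> omega

lemma succAbove_eq_succAbove_add_one_iff :
    o.succAbove b = o.succAbove a + 1 ↔ b = a + 1 ∧ a + 1 ≠ o := by
  unfold succAbove; split_ifs <;> omega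

lemma succAbove_eq_add_one_iff : o.succAbove a = o + 1 ↔ a = o := by
  unfold succAbove; split_ifs <;> omega

lemma succAbove_add_one_eq_iff : o.succAbove a + 1 = o ↔ a + 1 = o := by
  unfold succAbove; split_ifs <;> omega

lemma predAbove_lt_predAbove_iff (ha : a ≠ o) (hb : b ≠ o) :
    o.predAbove a < o.predAbove b ↔ a < b := by
  unfold predAbove; split_ifs <;> omega

lemma predAbove_injective (ha : a ≠ o) (hb : b ≠ o) (h : o.predAbove a = o.predAbove b) :
    a = b := by
  unfold predAbove at h; split_ifs at h <;> omega

lemma predAbove_of_lt (h : a < o) : o.predAbove a = a := if_pos h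

lemma predAbove_of_le (h : o ≤ a) : o.predAbove a = a - 1 := if_neg (by omega)

lemma predAbove_mem_Icc {N : ℕ} (ho₁ : 1 ≤ o) (ho₂ : o ≤ N + 1) (ha₁ : 1 ≤ a) (ha₂ : a ≤ N + 1)
    (ha : a ≠ o) : o.predAbove a ∈ Set.Icc 1 N := by
  unfold predAbove; split_ifs <;> simp only [Set.mem_Icc] <;> omega

lemma predAbove_eq_predAbove_add_one (ha : a ≠ o) (hb : b ≠ o)
    (h : o.predAbove a = o.predAbove b + 1) : a = b + 1 ∨ (a = b + 2 ∧ o = b + 1) := by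
  unfold predAbove at h; split_ifs at h <;> omega

end Nat

section Permutations

variable {m n p v x : ℕ} {f g : ℕ → ℕ}

namespace IsPermOn

lemma apply_bounds (hf : IsPermOn n f) {j : ℕ} (h₁ : 1 ≤ j) (h₂ : j ≤ n) : 1 ≤ f j ∧ f j ≤ n :=
  hf.1.1 ⟨h₁, h₂⟩

lemma eq_of_apply_eq (hf : IsPermOn n f) {j k : ℕ} (hj₁ : 1 ≤ j) (hj₂ : j ≤ n) (hk₁ : 1 ≤ k)
    (hk₂ : k ≤ n) (h : f j = f k) : j = k :=
  hf.1.2.1 ⟨hj₁, hj₂⟩ ⟨hk₁, hk₂⟩ h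

lemma exists_apply_eq (hf : IsPermOn n f) (h₁ : 1 ≤ v) (h₂ : v ≤ n) :
    ∃ p, (1 ≤ p ∧ p ≤ n) ∧ f p = v := by
  obtain ⟨k, hk, hfk⟩ := hf.1.2.2 ⟨h₁, h₂⟩
  exact ⟨k, hk, hfk⟩

lemma apply_eq_zero (hf : IsPermOn n f) {j : ℕ} (h : j = 0 ∨ n < j) : f j = 0 :=
  hf.2 j fun hj => by simp only [Set.mem_Icc] at hj; omega

lemma of_mapsTo_injOn (hmaps : ∀ j, 1 ≤ j → j ≤ n → 1 ≤ f j ∧ f j ≤ n)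
    (hinj : ∀ j k, 1 ≤ j → j ≤ n → 1 ≤ k → k ≤ n → f j = f k → j = k)
    (hzero : ∀ j, j = 0 ∨ n < j → f j = 0) : IsPermOn n f := by
  have hmaps' : Set.MapsTo f (Set.Icc 1 n) (Set.Icc 1 n) := fun j hj => hmaps j hj.1 hj.2
  refine ⟨((Set.finite_Icc 1 n).injOn_iff_bijOn_of_mapsTo hmaps').mp
    fun j hj k hk => hinj j k hj.1 hj.2 hk.1 hk.2, fun j hj => hzero j ?_⟩
  simp only [Set.mem_Icc] at hj
  omega

end IsPermOn

lemma finite_setOf_isPermOn (n : ℕ) : {f | IsPermOn n f}.Finite := by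
  refine (finite_setOf_bounded_support n n).subset fun f hf => ⟨fun i => ?_, fun i hi =>
    hf.apply_eq_zero (Or.inr hi)⟩
  by_cases hi : 1 ≤ i ∧ i ≤ n
  · exact (hf.apply_bounds hi.1 hi.2).2
  · rw [hf.apply_eq_zero (by omega)]; omega

def insertAt (p : ℕ) (g : ℕ → ℕ) (v : ℕ) : ℕ → ℕ :=
  fun j => if j = p then v else g (p.predAbove j)

def eraseAt (p : ℕ) (f : ℕ → ℕ) : ℕ → ℕ := fun j => f (p.succAbove j)

lemma insertAt_of_ne {j : ℕ} (h : j ≠ p) : insertAt p g v j = g (p.predAbove j) := if_neg h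

lemma insertAt_self : insertAt p g v p = v := if_pos rfl

lemma insertAt_of_lt {j : ℕ} (h : j < p) : insertAt p g v j = g j := by
  rw [insertAt_of_ne h.ne, Nat.predAbove_of_lt h]

lemma insertAt_of_gt {j : ℕ} (h : p < j) : insertAt p g v j = g (j - 1) := by
  rw [insertAt_of_ne h.ne', Nat.predAbove_of_le h.le]

lemma eraseAt_insertAt (p : ℕ) (g : ℕ → ℕ) (v : ℕ) : eraseAt p (insertAt p g v) = g :=
  funext fun _ => by rw [eraseAt, insertAt_of_ne Nat.succAbove_ne, Nat.predAbove_succAbove]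

lemma insertAt_eraseAt (hv : f p = v) : insertAt p (eraseAt p f) v = f := by
  funext j
  by_cases hj : j = p
  · rw [hj, insertAt_self, hv]
  · rw [insertAt_of_ne hj, eraseAt, Nat.succAbove_predAbove hj]

lemma isPermOn_insertAt (hg : IsPermOn m g) (hp₁ : 1 ≤ p) (hp₂ : p ≤ m + 1) :
    IsPermOn (m + 1) (insertAt p g (m + 1)) := by
  have hval : ∀ j, 1 ≤ j → j ≤ m + 1 → j ≠ p → insertAt p g (m + 1) j = g (p.predAbove j) ∧
      1 ≤ g (p.predAbove j) ∧ g (p.predAbove j) ≤ m := fun j h₁ h₂ hj => by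
    have := Nat.predAbove_mem_Icc hp₁ hp₂ h₁ h₂ hj
    exact ⟨insertAt_of_ne hj, hg.apply_bounds this.1 this.2⟩
  refine IsPermOn.of_mapsTo_injOn (fun j h₁ h₂ => ?_) (fun j k hj₁ hj₂ hk₁ hk₂ he => ?_)
    (fun j hj => ?_)
  · by_cases hj : j = p
    · rw [hj, insertAt_self]; omega
    · have := hval j h₁ h₂ hj; omega
  · by_cases hj : j = p <;> by_cases hk : k = p
    · rw [hj, hk]
    · have := hval k hk₁ hk₂ hk; rw [hj, insertAt_self] at he; omega
    · have := hval j hj₁ hj₂ hj; rw [hk, insertAt_self] at he; omega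
    · rw [(hval j hj₁ hj₂ hj).1, (hval k hk₁ hk₂ hk).1] at he
      have hj' := Nat.predAbove_mem_Icc hp₁ hp₂ hj₁ hj₂ hj
      have hk' := Nat.predAbove_mem_Icc hp₁ hp₂ hk₁ hk₂ hk
      exact Nat.predAbove_injective hj hk (hg.eq_of_apply_eq hj'.1 hj'.2 hk'.1 hk'.2 he)
  · rw [insertAt_of_ne (by omega)]
    unfold Nat.predAbove
    split_ifs <;> exact hg.apply_eq_zero (by omega)

lemma isPermOn_eraseAt (hf : IsPermOn (m + 1) f) (hp₁ : 1 ≤ p) (hp₂ : p ≤ m + 1)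
    (hfp : f p = m + 1) : IsPermOn m (eraseAt p f) := by
  have hval : ∀ j, 1 ≤ j → j ≤ m → 1 ≤ p.succAbove j ∧ p.succAbove j ≤ m + 1 := fun j h₁ h₂ => by
    have := Nat.succAbove_bounds (o := p) (a := j); omega
  refine IsPermOn.of_mapsTo_injOn (fun j h₁ h₂ => ?_) (fun j k hj₁ hj₂ hk₁ hk₂ he => ?_)
    (fun j hj => ?_)
  · obtain ⟨h₁', h₂'⟩ := hval j h₁ h₂
    have := hf.apply_bounds h₁' h₂'
    have : f (p.succAbove j) ≠ f p := fun h =>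
      Nat.succAbove_ne (hf.eq_of_apply_eq h₁' h₂' hp₁ hp₂ h)
    rw [eraseAt]
    omega
  · obtain ⟨hj₁', hj₂'⟩ := hval j hj₁ hj₂
    obtain ⟨hk₁', hk₂'⟩ := hval k hk₁ hk₂
    exact Nat.succAbove_injective (hf.eq_of_apply_eq hj₁' hj₂' hk₁' hk₂' he)
  · rw [eraseAt]
    unfold Nat.succAbove
    split_ifs <;> exact hf.apply_eq_zero (by omega)

def pairBottoms (n : ℕ) (f : ℕ → ℕ) (R : ℕ → ℕ → Prop) : Set ℕ :=
  {v | ∃ j, 1 ≤ j ∧ j + 1 ≤ n ∧ R (f j) (f (j + 1)) ∧ v = f j}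

lemma permAscBottomProper_eq_pairBottoms (n : ℕ) (f : ℕ → ℕ) :
    permAscBottomProper n f = pairBottoms n f (fun a b => a + 1 < b) := rfl

def permAdjAscBottom (n : ℕ) (f : ℕ → ℕ) : Set ℕ := pairBottoms n f (fun a b => a + 1 = b)

lemma image_pred_permAdjAsc (n : ℕ) (f : ℕ → ℕ) :
    (fun a => a - 1) '' permAdjAsc n f = permAdjAscBottom n f := by
  ext v
  constructor
  · rintro ⟨_, ⟨j, h₂, hn, hadj, rfl⟩, rfl⟩
    dsimp only
    exact ⟨j - 1, by omega, by omega, by rwa [Nat.sub_add_cancel (by omega)], by omega⟩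
  · rintro ⟨j, h₁, hn, hadj, rfl⟩
    exact ⟨f (j + 1), ⟨j + 1, by omega, hn, hadj, rfl⟩, by dsimp only; omega⟩

lemma IsPermOn.mem_pairBottoms {R : ℕ → ℕ → Prop} (hf : IsPermOn n f)
    (hv : v ∈ pairBottoms n f R) : 1 ≤ v ∧ ∃ w, w ≤ n ∧ R v w := by
  obtain ⟨j, h₁, h₂, hR, rfl⟩ := hv
  exact ⟨(hf.apply_bounds h₁ (by omega)).1, _, (hf.apply_bounds (by omega) h₂).2, hR⟩

lemma IsPermOn.disjoint_pairBottoms {R R' : ℕ → ℕ → Prop} (hf : IsPermOn n f)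
    (hRR' : ∀ a b, R a b → ¬ R' a b) : Disjoint (pairBottoms n f R) (pairBottoms n f R') := by
  refine Set.disjoint_left.mpr ?_
  rintro _ ⟨j, hj₁, hj₂, hR, rfl⟩ ⟨k, hk₁, hk₂, hR', hjk⟩
  obtain rfl := hf.eq_of_apply_eq hk₁ (by omega) hj₁ (by omega) hjk.symm
  exact hRR' _ _ hR hR'

lemma pairBottoms_insertAt_subset {R : ℕ → ℕ → Prop} (hg : IsPermOn m g) (hp₁ : 1 ≤ p)
    (hp₂ : p ≤ m + 1) :
    pairBottoms (m + 1) (insertAt p g v) R ⊆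
      pairBottoms m g R \ {u | 2 ≤ p ∧ u = g (p - 1)} ∪ {u | 2 ≤ p ∧ u = g (p - 1) ∧ R u v} ∪
        {u | p ≤ m ∧ u = v ∧ R v (g p)} := by
  rintro _ ⟨j, hj₁, hj₂, hR, rfl⟩
  simp only [Set.mem_union, Set.mem_sdiff, Set.mem_ofPred_eq]
  rcases lt_trichotomy (j + 1) p with h | h | h
  · rw [insertAt_of_lt (by omega), insertAt_of_lt h] at hR
    rw [insertAt_of_lt (by omega)]
    refine Or.inl (Or.inl ⟨⟨j, hj₁, by omega, hR, rfl⟩, fun ⟨_, he⟩ => ?_⟩)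
    have := hg.eq_of_apply_eq hj₁ (by omega) (by omega) (by omega) he
    omega
  · subst h
    rw [insertAt_of_lt (by omega), insertAt_self] at hR
    rw [insertAt_of_lt (by omega)]
    exact Or.inl (Or.inr ⟨by omega, rfl, hR⟩)
  · rcases Nat.lt_or_ge p j with h' | h'
    · rw [insertAt_of_gt h', insertAt_of_gt (by omega), Nat.add_sub_cancel] at hR
      rw [insertAt_of_gt h']
      refine Or.inl (Or.inl ⟨⟨j - 1, by omega, by omega, ?_, rfl⟩, fun ⟨_, he⟩ => ?_⟩)
      · rwa [Nat.sub_add_cancel (by omega)]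
      · have := hg.eq_of_apply_eq (by omega) (by omega) (by omega) (by omega) he
        omega
    · obtain rfl : j = p := by omega
      rw [insertAt_self, insertAt_of_gt (by omega), Nat.add_sub_cancel] at hR
      rw [insertAt_self]
      exact Or.inr ⟨by omega, rfl, hR⟩

lemma subset_pairBottoms_insertAt {R : ℕ → ℕ → Prop} (hp₁ : 1 ≤ p) (hp₂ : p ≤ m + 1) :
    pairBottoms m g R \ {u | 2 ≤ p ∧ u = g (p - 1)} ∪ {u | 2 ≤ p ∧ u = g (p - 1) ∧ R u v} ∪
        {u | p ≤ m ∧ u = v ∧ R v (g p)} ⊆ pairBottoms (m + 1) (insertAt p g v) R := by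
  rintro _ ((⟨⟨k, hk₁, hk₂, hR, rfl⟩, hne⟩ | ⟨hp, rfl, hR⟩) | ⟨hp, rfl, hR⟩)
  · rcases lt_trichotomy (k + 1) p with h | h | h
    · exact ⟨k, hk₁, by omega, by rwa [insertAt_of_lt (by omega), insertAt_of_lt h],
        (insertAt_of_lt (by omega)).symm⟩
    · exact absurd ⟨by omega, by rw [← h, Nat.add_sub_cancel]⟩ hne
    · refine ⟨k + 1, by omega, by omega, ?_, ?_⟩
      · rwa [insertAt_of_gt (by omega), insertAt_of_gt (by omega), Nat.add_sub_cancel,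
          Nat.add_sub_cancel]
      · rw [insertAt_of_gt (by omega), Nat.add_sub_cancel]
  · refine ⟨p - 1, by omega, by omega, ?_, (insertAt_of_lt (by omega)).symm⟩
    rwa [Nat.sub_add_cancel hp₁, insertAt_of_lt (by omega), insertAt_self]
  · refine ⟨p, hp₁, by omega, ?_, insertAt_self.symm⟩
    rwa [insertAt_self, insertAt_of_gt (by omega), Nat.add_sub_cancel]

/-- Only the pair `(g (p - 1), g p)` changes: it becomes `(g (p - 1), v)` and `(v, g p)`. -/
lemma pairBottoms_insertAt {R : ℕ → ℕ → Prop} (hg : IsPermOn m g) (hp₁ : 1 ≤ p)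
    (hp₂ : p ≤ m + 1) :
    pairBottoms (m + 1) (insertAt p g v) R =
      pairBottoms m g R \ {u | 2 ≤ p ∧ u = g (p - 1)} ∪ {u | 2 ≤ p ∧ u = g (p - 1) ∧ R u v} ∪
        {u | p ≤ m ∧ u = v ∧ R v (g p)} :=
  (pairBottoms_insertAt_subset hg hp₁ hp₂).antisymm (subset_pairBottoms_insertAt hp₁ hp₂)

open Classical in
noncomputable def posOf (n : ℕ) (f : ℕ → ℕ) (v : ℕ) : ℕ :=
  if h : ∃ p, (1 ≤ p ∧ p ≤ n) ∧ f p = v then h.choose else 0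

lemma posOf_eq (hf : IsPermOn n f) (hp₁ : 1 ≤ p) (hp₂ : p ≤ n) (hfp : f p = v) :
    posOf n f v = p := by
  have h : ∃ p, (1 ≤ p ∧ p ≤ n) ∧ f p = v := ⟨p, ⟨hp₁, hp₂⟩, hfp⟩
  obtain ⟨⟨h₁, h₂⟩, hfv⟩ := h.choose_spec
  rw [posOf, dif_pos h]
  exact hf.eq_of_apply_eq h₁ h₂ hp₁ hp₂ (hfv.trans hfp.symm)

lemma posOf_zero (hf : IsPermOn n f) : posOf n f 0 = 0 := by
  rw [posOf, dif_neg]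
  rintro ⟨p, ⟨h₁, h₂⟩, hp⟩
  have := hf.apply_bounds h₁ h₂
  omega

lemma posOf_le_and_apply (hf : IsPermOn n f) (hv : v ≤ n) :
    posOf n f v ≤ n ∧ f (posOf n f v) = v := by
  rcases Nat.eq_zero_or_pos v with rfl | hv₀
  · rw [posOf_zero hf]
    exact ⟨Nat.zero_le _, hf.apply_eq_zero (Or.inl rfl)⟩
  · obtain ⟨p, ⟨hp₁, hp₂⟩, hfp⟩ := hf.exists_apply_eq hv₀ hv
    rw [posOf_eq hf hp₁ hp₂ hfp]
    exact ⟨hp₂, hfp⟩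

/-- Insert `m + 1` right after the value `x` of `g`; in front when `x = 0`, as the junk value
`posOf m g 0 = 0` places it after position `0`. -/
noncomputable def insertAfter (m : ℕ) (g : ℕ → ℕ) (x : ℕ) : ℕ → ℕ :=
  insertAt (posOf m g x + 1) g (m + 1)

lemma isPermOn_insertAfter (hg : IsPermOn m g) (hx : x ≤ m) :
    IsPermOn (m + 1) (insertAfter m g x) :=
  isPermOn_insertAt hg (by omega) (by have := (posOf_le_and_apply hg hx).1; omega)

lemma insertAfter_injective {g' : ℕ → ℕ} {x' : ℕ} (hg : IsPermOn m g) (hg' : IsPermOn m g')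
    (hx : x ≤ m) (hx' : x' ≤ m) (h : insertAfter m g x = insertAfter m g' x') :
    x = x' ∧ g = g' := by
  obtain ⟨hp, hgp⟩ := posOf_le_and_apply hg hx
  obtain ⟨hp', hgp'⟩ := posOf_le_and_apply hg' hx'
  have hpos : posOf m g x = posOf m g' x' := by
    have h₁ : insertAfter m g x (posOf m g x + 1) = m + 1 := insertAt_self
    have h₂ : insertAfter m g x (posOf m g' x' + 1) = m + 1 := h ▸ insertAt_self
    have := (isPermOn_insertAfter hg hx).eq_of_apply_eq (by omega) (by omega) (by omega) (by omega)
      (h₁.trans h₂.symm)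
    omega
  have hgg' : g = g' := by
    rw [insertAfter, insertAfter, ← hpos] at h
    rw [← eraseAt_insertAt (posOf m g x + 1) g (m + 1),
      ← eraseAt_insertAt (posOf m g x + 1) g' (m + 1), h]
  subst hgg'
  exact ⟨by rw [← hgp, hpos, hgp'], rfl⟩

lemma exists_insertAfter_eq (hf : IsPermOn (m + 1) f) :
    ∃ x, x ≤ m ∧ ∃ g, IsPermOn m g ∧ insertAfter m g x = f := by
  obtain ⟨p, ⟨hp₁, hp₂⟩, hfp⟩ := hf.exists_apply_eq (v := m + 1) (by omega) le_rfl
  have hg := isPermOn_eraseAt hf hp₁ hp₂ hfp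
  have hx : eraseAt p f (p - 1) = f (p - 1) := by rw [eraseAt, Nat.succAbove_of_lt (by omega)]
  have hxm : f (p - 1) ≤ m := by
    rcases Nat.eq_or_lt_of_le hp₁ with rfl | hp
    · rw [hf.apply_eq_zero (Or.inl rfl)]; omega
    · have := hf.apply_bounds (j := p - 1) (by omega) (by omega)
      have : f (p - 1) ≠ f p := fun h => by
        have := hf.eq_of_apply_eq (by omega) (by omega) hp₁ hp₂ h; omega
      omega
  refine ⟨f (p - 1), hxm, eraseAt p f, hg, ?_⟩
  have hpos : posOf m (eraseAt p f) (f (p - 1)) + 1 = p := by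
    rcases Nat.eq_or_lt_of_le hp₁ with rfl | hp
    · rw [hf.apply_eq_zero (Or.inl rfl), posOf_zero hg]
    · rw [posOf_eq hg (by omega) (by omega) hx]; omega
  rw [insertAfter, hpos, insertAt_eraseAt hfp]

lemma pairBottoms_insertAfter {R : ℕ → ℕ → Prop} (hg : IsPermOn m g) (hx : x ≤ m)
    (hR : ∀ a, a ≤ m → ¬ R (m + 1) a) :
    pairBottoms (m + 1) (insertAfter m g x) R =
      pairBottoms m g R \ {x} ∪ {u | u = x ∧ 1 ≤ x ∧ R x (m + 1)} := by
  obtain ⟨hp, hgp⟩ := posOf_le_and_apply hg hx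
  rw [insertAfter, pairBottoms_insertAt hg (by omega) (by omega), Nat.add_sub_cancel, hgp]
  have hx₀ : 2 ≤ posOf m g x + 1 ↔ 1 ≤ x := by
    constructor
    · intro h
      have := hg.apply_bounds (j := posOf m g x) (by omega) hp
      omega
    · intro h
      rcases Nat.eq_zero_or_pos (posOf m g x) with h₀ | h₀
      · rw [h₀, hg.apply_eq_zero (Or.inl rfl)] at hgp; omega
      · omega
  ext u
  simp only [hx₀, Set.mem_union, Set.mem_sdiff, Set.mem_ofPred_eq, Set.mem_singleton_iff]
  constructor
  · rintro ((⟨hu, hne⟩ | ⟨h₁, rfl, hRu⟩) | ⟨hpm, -, hRu⟩)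
    · exact Or.inl ⟨hu, fun he => hne ⟨(hg.mem_pairBottoms (he ▸ hu)).1, he⟩⟩
    · exact Or.inr ⟨rfl, h₁, hRu⟩
    · exact absurd hRu (hR _ (hg.apply_bounds (by omega) hpm).2)
  · rintro (⟨hu, hne⟩ | ⟨rfl, h₁, hRu⟩)
    · exact Or.inl (Or.inl ⟨hu, fun ⟨_, he⟩ => hne he⟩)
    · exact Or.inl (Or.inr ⟨h₁, rfl, hRu⟩)

end Permutations

section PermutationCount

variable {m n x : ℕ} {f g : ℕ → ℕ} {A B A' B' : Set ℕ}

def permClass (n : ℕ) (A B : Set ℕ) : Set (ℕ → ℕ) :=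
  {f | IsPermOn n f ∧ permAscBottomProper n f = A ∧ permAdjAscBottom n f = B}

lemma permClass_finite : (permClass n A B).Finite :=
  (finite_setOf_isPermOn n).subset fun _ hf => hf.1

lemma IsPermOn.disjoint_permAscBottomProper_permAdjAscBottom (hf : IsPermOn n f) :
    Disjoint (permAscBottomProper n f) (permAdjAscBottom n f) :=
  hf.disjoint_pairBottoms (R := fun a b => a + 1 < b) fun a b h h' => by omega

lemma admissible_of_mem_permClass (hf : f ∈ permClass n A B) : Admissible n A B := by
  obtain ⟨hf, rfl, rfl⟩ := hf
  refine ⟨fun a ha => ?_, fun b hb => ?_, hf.disjoint_permAscBottomProper_permAdjAscBottom⟩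
  · obtain ⟨h₁, w, hw, hR⟩ := hf.mem_pairBottoms (R := fun a b => a + 1 < b) ha; omega
  · obtain ⟨h₁, w, hw, hR⟩ := hf.mem_pairBottoms (R := fun a b => a + 1 = b) hb; omega

lemma ncard_permClass_of_not_admissible (h : ¬ Admissible n A B) :
    (permClass n A B).ncard = 0 := by
  rw [Set.eq_empty_of_forall_notMem fun f hf => h (admissible_of_mem_permClass hf),
    Set.ncard_empty]

lemma permAscBottomProper_insertAfter (hg : IsPermOn m g) (hx : x ≤ m) :
    permAscBottomProper (m + 1) (insertAfter m g x) =
      if 1 ≤ x ∧ x < m then insert x (permAscBottomProper m g) else permAscBottomProper m g := by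
  simp only [permAscBottomProper_eq_pairBottoms]
  rw [pairBottoms_insertAfter hg hx fun a ha h => by omega]
  split_ifs with h
  · ext u
    simp only [Set.mem_union, Set.mem_sdiff, Set.mem_singleton_iff, Set.mem_ofPred_eq,
      Set.mem_insert_iff]
    grind
  · have hxA : x ∉ pairBottoms m g (fun a b => a + 1 < b) := fun hx' => by
      obtain ⟨h₁, w, hw, hR⟩ := hg.mem_pairBottoms hx'; omega
    ext u
    simp only [Set.mem_union, Set.mem_sdiff, Set.mem_singleton_iff, Set.mem_ofPred_eq]
    grind

lemma permAdjAscBottom_insertAfter (hm : 1 ≤ m) (hg : IsPermOn m g) (hx : x ≤ m) :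
    permAdjAscBottom (m + 1) (insertAfter m g x) =
      if x = m then insert m (permAdjAscBottom m g) else permAdjAscBottom m g \ {x} := by
  rw [permAdjAscBottom, pairBottoms_insertAfter hg hx fun a ha h => by omega]
  ext u
  split_ifs <;>
  · simp only [Set.mem_union, Set.mem_sdiff, Set.mem_singleton_iff, Set.mem_ofPred_eq,
      Set.mem_insert_iff]
    grind [permAdjAscBottom]

def permInsertionFiber (m x : ℕ) (A B : Set ℕ) : Set (ℕ → ℕ) :=
  {g | g ∈ {g | IsPermOn m g} ∧ insertAfter m g x ∈ permClass (m + 1) A B}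

lemma mem_permInsertionFiber (hm : 1 ≤ m) (hx : x ≤ m) :
    g ∈ permInsertionFiber m x A B ↔ IsPermOn m g ∧
      (if 1 ≤ x ∧ x < m then insert x (permAscBottomProper m g) else permAscBottomProper m g)
        = A ∧
      (if x = m then insert m (permAdjAscBottom m g) else permAdjAscBottom m g \ {x}) = B := by
  constructor
  · rintro ⟨hg, -, hA, hB⟩
    exact ⟨hg, permAscBottomProper_insertAfter hg hx ▸ hA,
      permAdjAscBottom_insertAfter hm hg hx ▸ hB⟩
  · rintro ⟨hg, hA, hB⟩
    exact ⟨hg, isPermOn_insertAfter hg hx, (permAscBottomProper_insertAfter hg hx).trans hA,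
      (permAdjAscBottom_insertAfter hm hg hx).trans hB⟩

lemma disjoint_permClass (h : A ≠ A' ∨ B ≠ B') :
    Disjoint (permClass n A B) (permClass n A' B') := by
  refine Set.disjoint_left.mpr ?_
  rintro f ⟨-, rfl, rfl⟩ ⟨-, hA, hB⟩
  exact h.elim (· hA) (· hB)

lemma ncard_permClass_succ_eq_sum :
    (permClass (m + 1) A B).ncard =
      ∑ x ∈ Finset.range (m + 1), (permInsertionFiber m x A B).ncard :=
  ncard_eq_sum_ncard_of_insertion _ _ (fun x g => insertAfter m g x)
    (fun _ _ => finite_setOf_isPermOn m)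
    (fun _ hx _ hx' _ hg _ hg' h => insertAfter_injective hg hg'
      (Nat.lt_succ_iff.mp (Finset.mem_range.mp hx))
      (Nat.lt_succ_iff.mp (Finset.mem_range.mp hx')) h)
    (fun _ hf => by
      obtain ⟨x, hx, g, hg, rfl⟩ := exists_insertAfter_eq hf.1
      exact ⟨x, Finset.mem_range.mpr (Nat.lt_succ_of_le hx), g, hg, rfl⟩)

lemma permInsertionFiber_zero (hm : 1 ≤ m) : permInsertionFiber m 0 A B = permClass m A B := by
  ext g
  rw [mem_permInsertionFiber hm (Nat.zero_le m), if_neg (by omega), if_neg (by omega)]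
  refine and_congr_right fun hg => ?_
  have h₀ : 0 ∉ permAdjAscBottom m g := fun h =>
    absurd (hg.mem_pairBottoms (R := fun a b => a + 1 = b) h).1 (by omega)
  rw [Set.sdiff_singleton_eq_self h₀]

open Classical in
lemma permInsertionFiber_top (hm : 1 ≤ m) :
    permInsertionFiber m m A B = if m ∈ B then permClass m A (B \ {m}) else ∅ := by
  ext g
  rw [mem_permInsertionFiber hm le_rfl, if_neg (by omega), if_pos rfl]
  constructor
  · rintro ⟨hg, hA, hB⟩
    have hmB : m ∉ permAdjAscBottom m g := fun h => by
      obtain ⟨-, w, hw, hR⟩ := hg.mem_pairBottoms (R := fun a b => a + 1 = b) h; omega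
    rw [insert_eq_iff_of_notMem hmB] at hB
    rw [if_pos hB.1]
    exact ⟨hg, hA, hB.2⟩
  · split_ifs with hmB
    · rintro ⟨hg, hA, hB⟩
      exact ⟨hg, hA, by rw [hB]; exact Set.insert_sdiff_self_of_mem hmB⟩
    · exact False.elim

open Classical in
lemma permInsertionFiber_of_lt (hx₁ : 1 ≤ x) (hxm : x < m) (hAB : Disjoint A B) :
    permInsertionFiber m x A B = if x ∈ A then
      permClass m A B ∪ permClass m (A \ {x}) B ∪ permClass m (A \ {x}) (insert x B) else ∅ := by
  ext g
  rw [mem_permInsertionFiber (by omega) hxm.le, if_pos ⟨hx₁, hxm⟩, if_neg hxm.ne]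
  split_ifs with hxA
  · have hxB : x ∉ B := Set.disjoint_left.mp hAB hxA
    simp only [Set.mem_union]
    constructor
    · rintro ⟨hg, h⟩
      rw [insert_eq_and_sdiff_singleton_eq_iff hg.disjoint_permAscBottomProper_permAdjAscBottom
        hxB] at h
      rcases h.2 with ⟨hA, hB⟩ | ⟨hA, hB⟩ | ⟨hA, hB⟩
      exacts [Or.inl (Or.inl ⟨hg, hA, hB⟩), Or.inl (Or.inr ⟨hg, hA, hB⟩), Or.inr ⟨hg, hA, hB⟩]
    · rintro ((⟨hg, hA, hB⟩ | ⟨hg, hA, hB⟩) | ⟨hg, hA, hB⟩) <;>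
      refine ⟨hg, (insert_eq_and_sdiff_singleton_eq_iff
        hg.disjoint_permAscBottomProper_permAdjAscBottom hxB).mpr ⟨hxA, ?_⟩⟩
      exacts [Or.inl ⟨hA, hB⟩, Or.inr (Or.inl ⟨hA, hB⟩), Or.inr (Or.inr ⟨hA, hB⟩)]
  · exact ⟨fun ⟨_, hA, _⟩ => hxA (hA ▸ Set.mem_insert x _), False.elim⟩

open Classical in
lemma ncard_permInsertionFiber_of_lt (hx₁ : 1 ≤ x) (hxm : x < m) (hAB : Disjoint A B) :
    (permInsertionFiber m x A B).ncard = if x ∈ A then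
      (permClass m A B).ncard + (permClass m (A \ {x}) B).ncard +
        (permClass m (A \ {x}) (insert x B)).ncard else 0 := by
  rw [permInsertionFiber_of_lt hx₁ hxm hAB]
  split_ifs with hxA
  · have hxB : x ∉ B := Set.disjoint_left.mp hAB hxA
    have hxAx : A ≠ A \ {x} := fun h => (h ▸ hxA : x ∈ A \ {x}).2 rfl
    rw [Set.ncard_union_eq _ (permClass_finite.union permClass_finite) permClass_finite,
      Set.ncard_union_eq (disjoint_permClass (Or.inl hxAx)) permClass_finite permClass_finite]
    exact Set.disjoint_union_left.mpr ⟨disjoint_permClass (Or.inl hxAx),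
      disjoint_permClass (Or.inr fun h => hxB (h ▸ Set.mem_insert x B))⟩
  · exact Set.ncard_empty _

theorem ncard_permClass_succ (hm : 1 ≤ m) (hAB : Admissible (m + 1) A B) :
    (permClass (m + 1) A B).ncard = recStep (fun A B => (permClass m A B).ncard) m A B := by
  rw [ncard_permClass_succ_eq_sum, Finset.sum_range_succ, Finset.range_eq_Ico,
    Finset.sum_eq_sum_Ico_succ_bot (by omega), permInsertionFiber_zero hm,
    permInsertionFiber_top hm, Finset.sum_congr rfl fun x hx => ncard_permInsertionFiber_of_lt
      (Finset.mem_Ico.mp hx).1 (Finset.mem_Ico.mp hx).2 hAB.2.2, recStep, apply_ite Set.ncard,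
    Set.ncard_empty]
  ring

lemma pairBottoms_one (f : ℕ → ℕ) (R : ℕ → ℕ → Prop) : pairBottoms 1 f R = ∅ :=
  Set.eq_empty_of_forall_notMem fun _ ⟨_, h₁, h₂, _⟩ => by omega

lemma ncard_permClass_one : (permClass 1 ∅ ∅).ncard = 1 := by
  have hid : IsPermOn 1 (fun j => if j = 1 then 1 else 0) :=
    IsPermOn.of_mapsTo_injOn (fun j h₁ h₂ => by simp [show j = 1 by omega])
      (fun j k _ hj _ hk _ => by omega) (fun j hj => if_neg (by omega))
  refine Set.ncard_eq_one.mpr ⟨_, Set.eq_singleton_iff_unique_mem.mpr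
    ⟨⟨hid, pairBottoms_one _ (fun a b => a + 1 < b), pairBottoms_one _ _⟩,
      fun f hf => funext fun j => ?_⟩⟩
  by_cases hj : j = 1
  · have := hf.1.apply_bounds (j := j) (by omega) (by omega)
    rw [if_pos hj]; omega
  · rw [if_neg hj]; exact hf.1.apply_eq_zero (by omega)

end PermutationCount

namespace Matching

section Basic

variable {n : ℕ}

theorem ext {M M' : Matching n} (h₁ : M.opener = M'.opener) (h₂ : M.closer = M'.closer) :
    M = M' := by
  cases M; cases M'; simp_all

def IsOpener (M : Matching n) (p : ℕ) : Prop := ∃ i, (1 ≤ i ∧ i ≤ n) ∧ M.opener i = p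

def IsCloser (M : Matching n) (p : ℕ) : Prop := ∃ i, (1 ≤ i ∧ i ≤ n) ∧ M.closer i = p

variable {M : Matching n} {i j p : ℕ}

lemma opener_bounds (h₁ : 1 ≤ i) (h₂ : i ≤ n) : 1 ≤ M.opener i ∧ M.opener i + 1 ≤ 2 * n := by
  have := M.opener_lt_closer i h₁ h₂
  have := M.opener_mem i h₁ h₂
  have := M.closer_mem i h₁ h₂
  simp only [Set.mem_Icc] at *
  omega

lemma closer_bounds (h₁ : 1 ≤ i) (h₂ : i ≤ n) : 2 ≤ M.closer i ∧ M.closer i ≤ 2 * n := by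
  have := M.opener_lt_closer i h₁ h₂
  have := M.opener_mem i h₁ h₂
  have := M.closer_mem i h₁ h₂
  simp only [Set.mem_Icc] at *
  omega

lemma closer_injective (hi₁ : 1 ≤ i) (hi₂ : i ≤ n) (hj₁ : 1 ≤ j) (hj₂ : j ≤ n)
    (h : M.closer i = M.closer j) : i = j := by
  rcases lt_trichotomy i j with hlt | he | hlt
  · have := M.closer_mono i j hi₁ hlt hj₂; omega
  · exact he
  · have := M.closer_mono j i hj₁ hlt hi₂; omega

lemma isOpener_or_isCloser (h₁ : 1 ≤ p) (h₂ : p ≤ 2 * n) : M.IsOpener p ∨ M.IsCloser p := by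
  obtain ⟨i, hi₁, hi₂, h | h⟩ := M.cover p ⟨h₁, h₂⟩
  exacts [Or.inl ⟨i, ⟨hi₁, hi₂⟩, h⟩, Or.inr ⟨i, ⟨hi₁, hi₂⟩, h⟩]

lemma IsOpener.not_isCloser (ho : M.IsOpener p) : ¬ M.IsCloser p := by
  rintro ⟨j, ⟨hj₁, hj₂⟩, rfl⟩
  obtain ⟨i, ⟨hi₁, hi₂⟩, hi⟩ := ho
  exact M.opener_ne_closer i j hi₁ hi₂ hj₁ hj₂ hi

lemma closer_last (hn : 1 ≤ n) : M.closer n = 2 * n := by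
  obtain ⟨i, hi₁, hi₂, h | h⟩ := M.cover (2 * n) ⟨by omega, le_rfl⟩
  · have := opener_bounds (M := M) hi₁ hi₂; omega
  · rcases Nat.lt_or_ge i n with hlt | hge
    · have := M.closer_mono i n hi₁ hlt le_rfl
      have := closer_bounds (M := M) hn le_rfl
      omega
    · rwa [show i = n by omega] at h

lemma closer_lt_last (h₁ : 1 ≤ i) (h₂ : i < n) : M.closer i + 1 ≤ 2 * n := by
  have := M.closer_mono i n h₁ h₂ le_rfl
  rw [closer_last (by omega)] at this
  omega

lemma eq_succ_of_closer_eq_succ (hy₁ : 1 ≤ i) (hy₂ : i ≤ n) (hc₁ : 1 ≤ j) (hc₂ : j ≤ n)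
    (h : M.closer j = M.closer i + 1) : j = i + 1 := by
  have hij : i < j := by
    by_contra hji
    rcases Nat.eq_or_lt_of_le (Nat.le_of_not_lt hji) with rfl | hlt
    · omega
    · have := M.closer_mono j i hc₁ hlt hy₂; omega
  by_contra hne
  have := M.closer_mono i (i + 1) hy₁ (by omega) (by omega)
  have := M.closer_mono (i + 1) j (by omega) (by omega) hc₂
  omega

instance : Finite (Matching n) := by
  have hbd : ∀ (M : Matching n) (i : ℕ), M.opener i ≤ 2 * n ∧ M.closer i ≤ 2 * n := by
    intro M i
    by_cases hi : 1 ≤ i ∧ i ≤ n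
    · have := opener_bounds (M := M) hi.1 hi.2
      have := closer_bounds (M := M) hi.1 hi.2
      omega
    · rw [M.opener_eq_zero i (by simp only [Set.mem_Icc]; omega),
        M.closer_eq_zero i (by simp only [Set.mem_Icc]; omega)]
      omega
  have hzero : ∀ (M : Matching n) (i : ℕ), n < i → M.opener i = 0 ∧ M.closer i = 0 :=
    fun M i hi => ⟨M.opener_eq_zero i (by simp only [Set.mem_Icc]; omega),
      M.closer_eq_zero i (by simp only [Set.mem_Icc]; omega)⟩
  refine Set.finite_univ_iff.mp (Set.Finite.of_finite_image (f := fun M => (M.opener, M.closer))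
    (((finite_setOf_bounded_support n (2 * n)).prod
      (finite_setOf_bounded_support n (2 * n))).subset ?_) fun M _ M' _ h => ?_)
  · rintro _ ⟨M, -, rfl⟩
    exact ⟨⟨fun i => (hbd M i).1, fun i hi => (hzero M i hi).1⟩,
      ⟨fun i => (hbd M i).2, fun i hi => (hzero M i hi).2⟩⟩
  · exact ext (congrArg Prod.fst h) (congrArg Prod.snd h)

lemma LcrSet_eq (hM : M.NoLeftNesting) :
    M.LcrSet = {i | (1 ≤ i ∧ i ≤ n) ∧ M.IsOpener (M.opener i + 1)} := by
  ext i
  simp only [LcrSet, Set.mem_ofPred_eq]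
  constructor
  · rintro ⟨h₁, h₂, j, hj₁, hj₂, hj, -, -⟩
    exact ⟨⟨h₁, h₂⟩, j, ⟨hj₁, hj₂⟩, hj⟩
  · rintro ⟨⟨h₁, h₂⟩, j, ⟨hj₁, hj₂⟩, hj⟩
    refine ⟨h₁, h₂, j, hj₁, hj₂, hj, ?_, ?_⟩
    · have := M.opener_lt_closer i h₁ h₂
      have := M.opener_ne_closer j i hj₁ hj₂ h₁ h₂
      omega
    · have hne : M.closer j ≠ M.closer i := fun he => by
        obtain rfl := closer_injective hj₁ hj₂ h₁ h₂ he
        omega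
      have := hM j i hj₁ hj₂ h₁ h₂
      omega

def shiftedLRcr (M : Matching n) : Set ℕ :=
  {y | 1 ≤ y ∧ y + 1 ≤ n ∧ M.opener (y + 1) = M.opener y + 1 ∧
    M.closer (y + 1) = M.closer y + 1}

def shiftedRadj (M : Matching n) : Set ℕ :=
  {y | 1 ≤ y ∧ y + 1 ≤ n ∧ M.closer (y + 1) = M.closer y + 1}

lemma image_pred_LRcrSet (M : Matching n) :
    (fun i => i - 1) '' M.LRcrSet = M.shiftedLRcr := by
  ext y
  constructor
  · rintro ⟨i, ⟨⟨h₁, h₂, -, -, h₅⟩, h₆⟩, rfl⟩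
    dsimp only
    refine ⟨by omega, by omega, ?_, ?_⟩ <;> rwa [Nat.sub_add_cancel (by omega)]
  · rintro ⟨h₁, h₂, h₃, h₄⟩
    refine ⟨y + 1, ⟨⟨by omega, h₂, ?_, ?_, ?_⟩, ?_⟩, by simp⟩ <;>
      simp only [Nat.add_sub_cancel]
    · omega
    · have := M.opener_lt_closer y h₁ (by omega)
      have := M.opener_ne_closer (y + 1) y (by omega) h₂ h₁ (by omega)
      omega
    · exact h₄
    · exact h₃

lemma shiftedLRcr_subset_shiftedRadj (M : Matching n) : M.shiftedLRcr ⊆ M.shiftedRadj :=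
  fun _ ⟨h₁, h₂, _, h₄⟩ => ⟨h₁, h₂, h₄⟩

lemma shiftedLRcr_subset_LcrSet (hM : M.NoLeftNesting) : M.shiftedLRcr ⊆ M.LcrSet := by
  rw [LcrSet_eq hM]
  rintro y ⟨h₁, h₂, h₃, -⟩
  exact ⟨⟨h₁, by omega⟩, y + 1, ⟨by omega, h₂⟩, h₃⟩

lemma last_notMem_LcrSet (hM : M.NoLeftNesting) (hn : 1 ≤ n) : n ∉ M.LcrSet := by
  rw [LcrSet_eq hM]
  rintro ⟨-, j, ⟨hj₁, hj₂⟩, hj⟩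
  have hjn : j ≠ n := by rintro rfl; omega
  exact hM j n hj₁ hj₂ hn le_rfl ⟨hj, M.closer_mono j n hj₁ (by omega) le_rfl⟩

/-- If the arc `n - 1` is a left crossing, it is crossed by the last arc, which then forms a
double crossing with it. -/
lemma pred_last_notMem_LcrSet_sdiff (hM : M.NoLeftNesting) (hn : 2 ≤ n) :
    n - 1 ∉ M.LcrSet \ M.shiftedLRcr := by
  rintro ⟨hl, hb⟩
  rw [LcrSet_eq hM] at hl
  obtain ⟨-, j, ⟨hj₁, hj₂⟩, hj⟩ := hl
  obtain rfl : n = j := by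
    by_contra hne
    have hne' : j ≠ n - 1 := by rintro rfl; omega
    exact hM j (n - 1) hj₁ hj₂ (by omega) (by omega)
      ⟨hj, M.closer_mono j (n - 1) hj₁ (by omega) (by omega)⟩
  have hlast := closer_last (M := M) (by omega)
  have hpred : M.closer (n - 1) + 1 = 2 * n := by
    have := closer_lt_last (M := M) (i := n - 1) (by omega) (by omega)
    rcases isOpener_or_isCloser (M := M) (p := 2 * n - 1) (by omega) (by omega) with
      ⟨i, ⟨hi₁, hi₂⟩, hi⟩ | ⟨i, ⟨hi₁, hi₂⟩, hi⟩
    · obtain rfl : n = i := by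
        by_contra hin
        have := closer_lt_last (M := M) hi₁ (by omega)
        have := M.opener_lt_closer i hi₁ hi₂
        omega
      have := M.opener_lt_closer (n - 1) (by omega) (by omega)
      have := M.opener_ne_closer n (n - 1) (by omega) le_rfl (by omega) (by omega)
      omega
    · have hin : i ≠ n := by rintro rfl; omega
      have : n - 1 ≤ i := by
        by_contra hlt
        have := M.closer_mono i (n - 1) hi₁ (by omega) (by omega)
        omega
      obtain rfl : i = n - 1 := by omega
      omega
  exact hb ⟨by omega, by omega, by rw [Nat.sub_add_cancel (by omega)]; exact hj,
    by rw [Nat.sub_add_cancel (by omega)]; omega⟩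

def openerCloserPoints (M : Matching n) : Set ℕ := {p | M.IsOpener p ∧ M.IsCloser (p + 1)}

lemma image_opener_Icc_sdiff_LcrSet (hM : M.NoLeftNesting) :
    M.opener '' (Set.Icc 1 n \ M.LcrSet) = M.openerCloserPoints := by
  rw [LcrSet_eq hM]
  ext p
  constructor
  · rintro ⟨i, ⟨⟨h₁, h₂⟩, hi⟩, rfl⟩
    have := opener_bounds (M := M) h₁ h₂
    exact ⟨⟨i, ⟨h₁, h₂⟩, rfl⟩, (isOpener_or_isCloser (by omega) (by omega)).resolve_left
      fun h => hi ⟨⟨h₁, h₂⟩, h⟩⟩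
  · rintro ⟨⟨i, ⟨h₁, h₂⟩, rfl⟩, hc⟩
    exact ⟨i, ⟨⟨h₁, h₂⟩, fun h => (h.2.not_isCloser hc)⟩, rfl⟩

lemma image_closer_pred_Icc_sdiff_shiftedRadj :
    (fun c => M.closer c - 1) '' (Set.Icc 1 n \ (· + 1) '' M.shiftedRadj) =
      M.openerCloserPoints := by
  ext p
  constructor
  · rintro ⟨c, ⟨⟨h₁, h₂⟩, hc⟩, rfl⟩
    dsimp only
    have := closer_bounds (M := M) h₁ h₂
    refine ⟨(isOpener_or_isCloser (by omega) (by omega)).resolve_right ?_,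
      ⟨c, ⟨h₁, h₂⟩, by omega⟩⟩
    rintro ⟨j, ⟨hj₁, hj₂⟩, hj⟩
    obtain rfl := eq_succ_of_closer_eq_succ (M := M) hj₁ hj₂ h₁ h₂ (by omega)
    exact hc ⟨j, ⟨hj₁, h₂, by omega⟩, rfl⟩
  · rintro ⟨⟨i, ⟨hi₁, hi₂⟩, rfl⟩, ⟨c, ⟨h₁, h₂⟩, hc⟩⟩
    refine ⟨c, ⟨⟨h₁, h₂⟩, ?_⟩, by simp only [hc, Nat.add_sub_cancel]⟩
    rintro ⟨y, ⟨hy₁, hy₂, hy⟩, rfl⟩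
    dsimp only at h₂ hc
    exact M.opener_ne_closer i y hi₁ hi₂ hy₁ (by omega) (by omega)

/-- Both sets are complementary, among the arcs, to the openers followed by a closer. -/
lemma ncard_shiftedRadj (hM : M.NoLeftNesting) : M.shiftedRadj.ncard = M.LcrSet.ncard := by
  have hL : M.LcrSet ⊆ Set.Icc 1 n := fun i ⟨h₁, h₂, _⟩ => ⟨h₁, h₂⟩
  have hR : (· + 1) '' M.shiftedRadj ⊆ Set.Icc 1 n := by
    rintro _ ⟨y, ⟨h₁, h₂, _⟩, rfl⟩; exact ⟨Nat.le_add_left 1 y, h₂⟩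
  have h₁ := (Set.InjOn.ncard_image (f := M.opener) (s := Set.Icc 1 n \ M.LcrSet)
    fun i hi j hj he => M.opener_inj i j hi.1.1 hi.1.2 hj.1.1 hj.1.2 he)
  have h₂ := (Set.InjOn.ncard_image (f := fun c => M.closer c - 1)
    (s := Set.Icc 1 n \ (· + 1) '' M.shiftedRadj) fun i hi j hj he => by
      have := closer_bounds (M := M) hi.1.1 hi.1.2
      have := closer_bounds (M := M) hj.1.1 hj.1.2
      exact closer_injective (M := M) hi.1.1 hi.1.2 hj.1.1 hj.1.2 (by simp only at he; omega))
  rw [image_opener_Icc_sdiff_LcrSet hM, Set.ncard_sdiff hL ((Set.finite_Icc 1 n).subset hL)] at h₁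
  rw [image_closer_pred_Icc_sdiff_shiftedRadj, Set.ncard_sdiff hR ((Set.finite_Icc 1 n).subset hR),
    Set.ncard_image_of_injective _ (add_left_injective 1)] at h₂
  have := Set.ncard_le_ncard hL
  have := Set.ncard_le_ncard hR
  rw [Set.ncard_image_of_injective _ (add_left_injective 1)] at this
  omega

end Basic

section Insertion

variable {m : ℕ} {o i x y : ℕ}

def insertArcOpener (M : Matching m) (o : ℕ) : ℕ → ℕ :=
  fun i => if 1 ≤ i ∧ i ≤ m then o.succAbove (M.opener i) else if i = m + 1 then o else 0

def insertArcCloser (M : Matching m) (o : ℕ) : ℕ → ℕ :=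
  fun i => if 1 ≤ i ∧ i ≤ m then o.succAbove (M.closer i) else if i = m + 1 then 2 * (m + 1)
    else 0

section insertArcOpener

variable {M : Matching m}

lemma insertArcOpener_of_le (h₁ : 1 ≤ i) (h₂ : i ≤ m) :
    M.insertArcOpener o i = o.succAbove (M.opener i) := if_pos ⟨h₁, h₂⟩

lemma insertArcOpener_last : M.insertArcOpener o (m + 1) = o := by
  simp [insertArcOpener]

lemma insertArcCloser_of_le (h₁ : 1 ≤ i) (h₂ : i ≤ m) :
    M.insertArcCloser o i = o.succAbove (M.closer i) := if_pos ⟨h₁, h₂⟩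

lemma insertArcCloser_last : M.insertArcCloser o (m + 1) = 2 * (m + 1) := by
  simp [insertArcCloser]

end insertArcOpener

def insertArc (M : Matching m) (o : ℕ) (ho : 1 ≤ o ∧ o ≤ 2 * m + 1) : Matching (m + 1) where
  opener := M.insertArcOpener o
  closer := M.insertArcCloser o
  opener_lt_closer i h₁ h₂ := by
    by_cases hi : i ≤ m
    · rw [insertArcOpener_of_le h₁ hi, insertArcCloser_of_le h₁ hi,
        Nat.succAbove_lt_succAbove_iff]
      exact M.opener_lt_closer i h₁ hi
    · obtain rfl : i = m + 1 := by omega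
      rw [insertArcOpener_last, insertArcCloser_last]
      omega
  closer_mono i j h₁ hij hj := by
    rw [insertArcCloser_of_le h₁ (by omega)]
    by_cases hjm : j ≤ m
    · rw [insertArcCloser_of_le (by omega) hjm, Nat.succAbove_lt_succAbove_iff]
      exact M.closer_mono i j h₁ hij hjm
    · obtain rfl : j = m + 1 := by omega
      have := (closer_bounds (M := M) h₁ (by omega)).2
      have := Nat.succAbove_bounds (o := o) (a := M.closer i)
      rw [insertArcCloser_last]
      omega
  opener_mem i h₁ h₂ := by
    by_cases hi : i ≤ m
    · have := opener_bounds (M := M) h₁ hi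
      have := Nat.succAbove_bounds (o := o) (a := M.opener i)
      rw [insertArcOpener_of_le h₁ hi]
      exact ⟨by omega, by omega⟩
    · obtain rfl : i = m + 1 := by omega
      rw [insertArcOpener_last]
      exact ⟨ho.1, by omega⟩
  closer_mem i h₁ h₂ := by
    by_cases hi : i ≤ m
    · have := closer_bounds (M := M) h₁ hi
      have := Nat.succAbove_bounds (o := o) (a := M.closer i)
      rw [insertArcCloser_of_le h₁ hi]
      exact ⟨by omega, by omega⟩
    · obtain rfl : i = m + 1 := by omega
      rw [insertArcCloser_last]
      exact ⟨by omega, le_rfl⟩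
  opener_inj i j h₁ h₂ h₃ h₄ he := by
    by_cases hi : i ≤ m <;> by_cases hj : j ≤ m
    · rw [insertArcOpener_of_le h₁ hi, insertArcOpener_of_le h₃ hj] at he
      exact M.opener_inj i j h₁ hi h₃ hj (Nat.succAbove_injective he)
    · rw [insertArcOpener_of_le h₁ hi, show j = m + 1 by omega, insertArcOpener_last] at he
      exact absurd he Nat.succAbove_ne
    · rw [insertArcOpener_of_le h₃ hj, show i = m + 1 by omega, insertArcOpener_last] at he
      exact absurd he.symm Nat.succAbove_ne
    · omega
  opener_ne_closer i j h₁ h₂ h₃ h₄ he := by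
    by_cases hi : i ≤ m <;> by_cases hj : j ≤ m
    · rw [insertArcOpener_of_le h₁ hi, insertArcCloser_of_le h₃ hj] at he
      exact M.opener_ne_closer i j h₁ hi h₃ hj (Nat.succAbove_injective he)
    · rw [insertArcOpener_of_le h₁ hi, show j = m + 1 by omega, insertArcCloser_last] at he
      have := (opener_bounds (M := M) h₁ hi).2
      have := Nat.succAbove_bounds (o := o) (a := M.opener i)
      omega
    · rw [show i = m + 1 by omega, insertArcOpener_last, insertArcCloser_of_le h₃ hj] at he
      exact absurd he.symm Nat.succAbove_ne
    · rw [show i = m + 1 by omega, insertArcOpener_last, show j = m + 1 by omega,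
        insertArcCloser_last] at he
      omega
  cover p hp := by
    by_cases hp₂ : p = 2 * (m + 1)
    · exact ⟨m + 1, by omega, le_rfl, Or.inr (by rw [insertArcCloser_last, hp₂])⟩
    by_cases hpo : p = o
    · exact ⟨m + 1, by omega, le_rfl, Or.inl (by rw [insertArcOpener_last, hpo])⟩
    simp only [Set.mem_Icc] at hp
    have hq := Nat.predAbove_mem_Icc ho.1 ho.2 hp.1 (by omega) hpo
    obtain ⟨i, hi₁, hi₂, hio | hio⟩ := M.cover _ hq
    · exact ⟨i, hi₁, by omega, Or.inl (by
        rw [insertArcOpener_of_le hi₁ hi₂, hio, Nat.succAbove_predAbove hpo])⟩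
    · exact ⟨i, hi₁, by omega, Or.inr (by
        rw [insertArcCloser_of_le hi₁ hi₂, hio, Nat.succAbove_predAbove hpo])⟩
  opener_eq_zero i hi := by
    simp only [Set.mem_Icc] at hi
    simp only [insertArcOpener]; split_ifs <;> omega
  closer_eq_zero i hi := by
    simp only [Set.mem_Icc] at hi
    simp only [insertArcCloser]; split_ifs <;> omega

def IsCloserOrEnd (M : Matching m) (o : ℕ) : Prop := M.IsCloser o ∨ o = 2 * m + 1

section insertArc

variable {M : Matching m} {ho : 1 ≤ o ∧ o ≤ 2 * m + 1}

lemma IsCloserOrEnd.not_isOpener (hval : M.IsCloserOrEnd o) : ¬ M.IsOpener o := fun h => by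
  rcases hval with hc | rfl
  · exact h.not_isCloser hc
  · obtain ⟨i, ⟨hi₁, hi₂⟩, hi⟩ := h
    have := opener_bounds (M := M) hi₁ hi₂
    omega

lemma insertArc_opener_of_le (h₁ : 1 ≤ i) (h₂ : i ≤ m) :
    (M.insertArc o ho).opener i = o.succAbove (M.opener i) := insertArcOpener_of_le h₁ h₂

lemma insertArc_opener_last : (M.insertArc o ho).opener (m + 1) = o := insertArcOpener_last

lemma insertArc_closer_of_le (h₁ : 1 ≤ i) (h₂ : i ≤ m) :
    (M.insertArc o ho).closer i = o.succAbove (M.closer i) := insertArcCloser_of_le h₁ h₂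

lemma insertArc_closer_last : (M.insertArc o ho).closer (m + 1) = 2 * (m + 1) :=
  insertArcCloser_last

lemma noLeftNesting_insertArc (hM : M.NoLeftNesting) (hval : M.IsCloserOrEnd o) :
    (M.insertArc o ho).NoLeftNesting := by
  rintro i j hi₁ hi₂ hj₁ hj₂ ⟨hadj, hlt⟩
  rcases Nat.lt_or_ge i (m + 1) with him | him
  · rw [insertArc_opener_of_le hi₁ (by omega)] at hadj
    rw [insertArc_closer_of_le hi₁ (by omega)] at hlt
    rcases Nat.lt_or_ge j (m + 1) with hjm | hjm
    · rw [insertArc_opener_of_le hj₁ (by omega),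
        Nat.succAbove_eq_succAbove_add_one_iff] at hadj
      rw [insertArc_closer_of_le hj₁ (by omega), Nat.succAbove_lt_succAbove_iff] at hlt
      exact hM i j hi₁ (by omega) hj₁ (by omega) ⟨hadj.1, hlt⟩
    · rw [show j = m + 1 by omega, insertArc_opener_last] at hadj
      exact hval.not_isOpener ⟨i, ⟨hi₁, by omega⟩, Nat.succAbove_eq_add_one_iff.mp hadj⟩
  · rw [show i = m + 1 by omega, insertArc_closer_last] at hlt
    have := (M.insertArc o ho).closer_mem j hj₁ hj₂
    simp only [Set.mem_Icc] at this
    omega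

lemma LcrSet_insertArc (hM : M.NoLeftNesting) (hval : M.IsCloserOrEnd o) :
    (M.insertArc o ho).LcrSet = M.LcrSet ∪ {i | (1 ≤ i ∧ i ≤ m) ∧ M.opener i + 1 = o} := by
  have hN := noLeftNesting_insertArc (ho := ho) hM hval
  rw [LcrSet_eq hN, LcrSet_eq hM]
  ext i
  simp only [Set.mem_union, Set.mem_ofPred_eq]
  constructor
  · rintro ⟨⟨h₁, h₂⟩, j, ⟨hj₁, hj₂⟩, hj⟩
    rcases Nat.lt_or_ge i (m + 1) with him | him
    · rw [insertArc_opener_of_le h₁ (by omega)] at hj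
      rcases Nat.lt_or_ge j (m + 1) with hjm | hjm
      · rw [insertArc_opener_of_le hj₁ (by omega),
          Nat.succAbove_eq_succAbove_add_one_iff] at hj
        exact Or.inl ⟨⟨h₁, by omega⟩, j, ⟨hj₁, by omega⟩, hj.1⟩
      · rw [show j = m + 1 by omega, insertArc_opener_last] at hj
        exact Or.inr ⟨⟨h₁, by omega⟩, Nat.succAbove_add_one_eq_iff.mp hj.symm⟩
    · rw [show i = m + 1 by omega, insertArc_opener_last] at hj
      rcases Nat.lt_or_ge j (m + 1) with hjm | hjm
      · rw [insertArc_opener_of_le hj₁ (by omega), Nat.succAbove_eq_add_one_iff] at hj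
        exact absurd ⟨j, ⟨hj₁, by omega⟩, hj⟩ hval.not_isOpener
      · rw [show j = m + 1 by omega, insertArc_opener_last] at hj
        omega
  · rintro (⟨⟨h₁, h₂⟩, j, ⟨hj₁, hj₂⟩, hj⟩ | ⟨⟨h₁, h₂⟩, hj⟩)
    · refine ⟨⟨h₁, by omega⟩, j, ⟨hj₁, by omega⟩, ?_⟩
      rw [insertArc_opener_of_le h₁ h₂, insertArc_opener_of_le hj₁ hj₂,
        Nat.succAbove_eq_succAbove_add_one_iff]
      exact ⟨hj, fun he => hval.not_isOpener ⟨j, ⟨hj₁, hj₂⟩, by omega⟩⟩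
    · refine ⟨⟨h₁, by omega⟩, m + 1, ⟨by omega, le_rfl⟩, ?_⟩
      rw [insertArc_opener_of_le h₁ h₂, insertArc_opener_last]
      exact (Nat.succAbove_add_one_eq_iff.mpr hj).symm

lemma shiftedLRcr_insertArc (hm : 1 ≤ m) (hval : M.IsCloserOrEnd o) :
    (M.insertArc o ho).shiftedLRcr = {y | y ∈ M.shiftedLRcr ∧ M.closer y + 1 ≠ o} ∪
      {y | y = m ∧ M.opener m + 1 = o} := by
  ext y
  simp only [shiftedLRcr, Set.mem_union, Set.mem_ofPred_eq]
  rcases Nat.eq_zero_or_pos y with rfl | hy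
  · constructor
    · rintro ⟨h, -⟩; omega
    · rintro (⟨⟨h, -⟩, -⟩ | ⟨h, -⟩) <;> omega
  rcases Nat.lt_or_ge (y + 1) (m + 1) with hym | hym
  · rw [insertArc_opener_of_le (i := y + 1) (by omega) (by omega),
      insertArc_opener_of_le (i := y) (by omega) (by omega),
      insertArc_closer_of_le (i := y + 1) (by omega) (by omega),
      insertArc_closer_of_le (i := y) (by omega) (by omega),
      Nat.succAbove_eq_succAbove_add_one_iff, Nat.succAbove_eq_succAbove_add_one_iff]
    constructor
    · rintro ⟨h₁, -, ⟨hop, -⟩, hcl, hne⟩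
      exact Or.inl ⟨⟨h₁, by omega, hop, hcl⟩, hne⟩
    · rintro (⟨⟨h₁, -, hop, hcl⟩, hne⟩ | ⟨rfl, -⟩)
      · exact ⟨h₁, by omega, ⟨hop, fun he =>
          hval.not_isOpener ⟨y + 1, ⟨by omega, by omega⟩, by omega⟩⟩, hcl, hne⟩
      · omega
  · constructor
    · rintro ⟨h₁, h₂, hop, -⟩
      obtain rfl : y = m := by omega
      rw [insertArc_opener_last, insertArc_opener_of_le h₁ le_rfl] at hop
      exact Or.inr ⟨rfl, Nat.succAbove_add_one_eq_iff.mp hop.symm⟩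
    · rintro (⟨⟨-, h₂, -⟩, -⟩ | ⟨rfl, hop⟩)
      · omega
      · refine ⟨hm, le_rfl, ?_, ?_⟩
        · rw [insertArc_opener_last, insertArc_opener_of_le hm le_rfl]
          exact (Nat.succAbove_add_one_eq_iff.mpr hop).symm
        · have := (opener_bounds (M := M) hm le_rfl).2
          rw [insertArc_closer_last, insertArc_closer_of_le hm le_rfl, closer_last hm,
            Nat.succAbove_of_le (by omega)]
          omega

end insertArc

lemma opener_ne_opener_last {M : Matching (m + 1)} (h₁ : 1 ≤ i) (h₂ : i ≤ m) :
    M.opener i ≠ M.opener (m + 1) := fun he => by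
  have := M.opener_inj i (m + 1) h₁ (by omega) (by omega) le_rfl he
  omega

lemma closer_ne_opener_last {M : Matching (m + 1)} (h₁ : 1 ≤ i) (h₂ : i ≤ m) :
    M.closer i ≠ M.opener (m + 1) :=
  fun he => M.opener_ne_closer (m + 1) i (by omega) le_rfl h₁ (by omega) he.symm

def eraseLast (M : Matching (m + 1)) : Matching m where
  opener i := if 1 ≤ i ∧ i ≤ m then (M.opener (m + 1)).predAbove (M.opener i) else 0
  closer i := if 1 ≤ i ∧ i ≤ m then (M.opener (m + 1)).predAbove (M.closer i) else 0
  opener_lt_closer i h₁ h₂ := by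
    rw [if_pos ⟨h₁, h₂⟩, if_pos ⟨h₁, h₂⟩, Nat.predAbove_lt_predAbove_iff
      (opener_ne_opener_last h₁ h₂) (closer_ne_opener_last h₁ h₂)]
    exact M.opener_lt_closer i h₁ (by omega)
  closer_mono i j h₁ hij hj := by
    rw [if_pos ⟨h₁, by omega⟩, if_pos ⟨by omega, hj⟩, Nat.predAbove_lt_predAbove_iff
      (closer_ne_opener_last h₁ (by omega)) (closer_ne_opener_last (by omega) hj)]
    exact M.closer_mono i j h₁ hij (by omega)
  opener_mem i h₁ h₂ := by
    rw [if_pos ⟨h₁, h₂⟩]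
    have := opener_bounds (M := M) h₁ (by omega)
    have := opener_bounds (M := M) (i := m + 1) (by omega) le_rfl
    exact Nat.predAbove_mem_Icc (by omega) (by omega) (by omega) (by omega)
      (opener_ne_opener_last h₁ h₂)
  closer_mem i h₁ h₂ := by
    rw [if_pos ⟨h₁, h₂⟩]
    have := closer_lt_last (M := M) h₁ (by omega)
    have := closer_bounds (M := M) h₁ (by omega)
    have := opener_bounds (M := M) (i := m + 1) (by omega) le_rfl
    exact Nat.predAbove_mem_Icc (by omega) (by omega) (by omega) (by omega)
      (closer_ne_opener_last h₁ h₂)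
  opener_inj i j h₁ h₂ h₃ h₄ he := by
    rw [if_pos ⟨h₁, h₂⟩, if_pos ⟨h₃, h₄⟩] at he
    exact M.opener_inj i j h₁ (by omega) h₃ (by omega) (Nat.predAbove_injective
      (opener_ne_opener_last h₁ h₂) (opener_ne_opener_last h₃ h₄) he)
  opener_ne_closer i j h₁ h₂ h₃ h₄ he := by
    rw [if_pos ⟨h₁, h₂⟩, if_pos ⟨h₃, h₄⟩] at he
    exact M.opener_ne_closer i j h₁ (by omega) h₃ (by omega) (Nat.predAbove_injective
      (opener_ne_opener_last h₁ h₂) (closer_ne_opener_last h₃ h₄) he)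
  cover p hp := by
    set o := M.opener (m + 1)
    simp only [Set.mem_Icc] at hp
    have := Nat.succAbove_bounds (o := o) (a := p)
    obtain ⟨i, hi₁, hi₂, hio | hio⟩ := M.cover (o.succAbove p) ⟨by omega, by omega⟩
    all_goals
      have him : i ≤ m := by
        by_contra h
        obtain rfl : i = m + 1 := by omega
        first
        | exact Nat.succAbove_ne hio.symm
        | rw [closer_last (by omega)] at hio; omega
      refine ⟨i, hi₁, him, ?_⟩
      simp only [if_pos (And.intro hi₁ him), hio, Nat.predAbove_succAbove, true_or, or_true]
  opener_eq_zero i hi := if_neg fun h => hi ⟨h.1, by omega⟩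
  closer_eq_zero i hi := if_neg fun h => hi ⟨h.1, by omega⟩

section eraseLast

variable {M : Matching (m + 1)}

lemma eraseLast_opener (h₁ : 1 ≤ i) (h₂ : i ≤ m) :
    M.eraseLast.opener i = (M.opener (m + 1)).predAbove (M.opener i) := if_pos ⟨h₁, h₂⟩

lemma eraseLast_closer (h₁ : 1 ≤ i) (h₂ : i ≤ m) :
    M.eraseLast.closer i = (M.opener (m + 1)).predAbove (M.closer i) := if_pos ⟨h₁, h₂⟩

lemma opener_last_bounds : 1 ≤ M.opener (m + 1) ∧ M.opener (m + 1) ≤ 2 * m + 1 := by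
  have := opener_bounds (M := M) (i := m + 1) (by omega) le_rfl
  omega

lemma noLeftNesting_eraseLast (hM : M.NoLeftNesting) : M.eraseLast.NoLeftNesting := by
  rintro i j hi₁ hi₂ hj₁ hj₂ ⟨hadj, hlt⟩
  rw [eraseLast_opener hi₁ hi₂, eraseLast_opener hj₁ hj₂] at hadj
  rw [eraseLast_closer hi₁ hi₂, eraseLast_closer hj₁ hj₂, Nat.predAbove_lt_predAbove_iff
    (closer_ne_opener_last hi₁ hi₂) (closer_ne_opener_last hj₁ hj₂)] at hlt
  rcases Nat.predAbove_eq_predAbove_add_one (opener_ne_opener_last hi₁ hi₂)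
    (opener_ne_opener_last hj₁ hj₂) hadj with h | ⟨h₁, h₂⟩
  · exact hM i j hi₁ (by omega) hj₁ (by omega) ⟨h, hlt⟩
  · have := closer_lt_last (M := M) hi₁ (by omega)
    refine hM i (m + 1) hi₁ (by omega) (by omega) le_rfl ⟨by omega, ?_⟩
    rw [closer_last (by omega)]
    omega

lemma eraseLast_insertArc (M : Matching m) (o : ℕ) (ho : 1 ≤ o ∧ o ≤ 2 * m + 1) :
    (M.insertArc o ho).eraseLast = M := by
  refine ext (funext fun i => ?_) (funext fun i => ?_) <;> by_cases h : 1 ≤ i ∧ i ≤ m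
  · rw [eraseLast_opener h.1 h.2, insertArc_opener_last, insertArc_opener_of_le h.1 h.2,
      Nat.predAbove_succAbove]
  · rw [M.opener_eq_zero i fun h' => h h']; exact if_neg h
  · rw [eraseLast_closer h.1 h.2, insertArc_opener_last, insertArc_closer_of_le h.1 h.2,
      Nat.predAbove_succAbove]
  · rw [M.closer_eq_zero i fun h' => h h']; exact if_neg h

lemma insertArc_eraseLast (M : Matching (m + 1)) :
    M.eraseLast.insertArc (M.opener (m + 1)) opener_last_bounds = M := by
  refine ext (funext fun i => ?_) (funext fun i => ?_) <;>
    obtain hi | rfl | hi : (1 ≤ i ∧ i ≤ m) ∨ i = m + 1 ∨ (i = 0 ∨ m + 1 < i) := by omega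
  · rw [insertArc_opener_of_le hi.1 hi.2, eraseLast_opener hi.1 hi.2,
      Nat.succAbove_predAbove (opener_ne_opener_last hi.1 hi.2)]
  · exact insertArc_opener_last
  · rw [(M.eraseLast.insertArc _ _).opener_eq_zero i (by simp only [Set.mem_Icc]; omega),
      M.opener_eq_zero i (by simp only [Set.mem_Icc]; omega)]
  · rw [insertArc_closer_of_le hi.1 hi.2, eraseLast_closer hi.1 hi.2,
      Nat.succAbove_predAbove (closer_ne_opener_last hi.1 hi.2)]
  · rw [insertArc_closer_last, closer_last (by omega)]
  · rw [(M.eraseLast.insertArc _ _).closer_eq_zero i (by simp only [Set.mem_Icc]; omega),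
      M.closer_eq_zero i (by simp only [Set.mem_Icc]; omega)]

/-- An opener right after the opener of the last arc would be a left nesting. -/
lemma isCloserOrEnd_eraseLast (hM : M.NoLeftNesting) :
    M.eraseLast.IsCloserOrEnd (M.opener (m + 1)) := by
  obtain ⟨ho₁, ho₂⟩ := opener_last_bounds (M := M)
  rcases Nat.lt_or_ge (M.opener (m + 1)) (2 * m + 1) with ho | ho
  · left
    rcases isOpener_or_isCloser (M := M) (p := M.opener (m + 1) + 1) (by omega) (by omega) with
      ⟨j, ⟨hj₁, hj₂⟩, hj⟩ | ⟨c, ⟨hc₁, hc₂⟩, hc⟩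
    · have hjm : j ≠ m + 1 := by rintro rfl; omega
      have := closer_lt_last (M := M) hj₁ (by omega)
      refine absurd ⟨hj, ?_⟩ (hM j (m + 1) hj₁ hj₂ (by omega) le_rfl)
      rw [closer_last (by omega)]
      omega
    · have hcm : c ≠ m + 1 := by rintro rfl; rw [closer_last (by omega)] at hc; omega
      refine ⟨c, ⟨hc₁, by omega⟩, ?_⟩
      rw [eraseLast_closer hc₁ (by omega), hc]
      unfold Nat.predAbove
      rw [if_neg (by omega)]
      omega
  · exact Or.inr (by omega)

end eraseLast

/-- The opener of the new last arc is placed right after the opener of the arc `x` (label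
`inl x`) or right after the closer of the arc `y` (label `inr y`). -/
def insertPos (M : Matching m) : ℕ ⊕ ℕ → ℕ
  | .inl x => M.opener x + 1
  | .inr y => M.closer y + 1

lemma insertArc_congr {M : Matching m} {o o' : ℕ} {ho : 1 ≤ o ∧ o ≤ 2 * m + 1}
    {ho' : 1 ≤ o' ∧ o' ≤ 2 * m + 1} (h : o = o') : M.insertArc o ho = M.insertArc o' ho' := by
  subst h; rfl

lemma insertPos_bounds (M : Matching m) (ℓ : ℕ ⊕ ℕ) :
    1 ≤ M.insertPos ℓ ∧ M.insertPos ℓ ≤ 2 * m + 1 := by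
  rcases ℓ with x | y
  · by_cases h : 1 ≤ x ∧ x ≤ m
    · have := opener_bounds (M := M) h.1 h.2; simp only [insertPos]; omega
    · simp only [insertPos, M.opener_eq_zero x fun h' => h h']; omega
  · by_cases h : 1 ≤ y ∧ y ≤ m
    · have := closer_bounds (M := M) h.1 h.2; simp only [insertPos]; omega
    · simp only [insertPos, M.closer_eq_zero y fun h' => h h']; omega

def insertAfter (M : Matching m) (ℓ : ℕ ⊕ ℕ) : Matching (m + 1) :=
  M.insertArc (M.insertPos ℓ) (M.insertPos_bounds ℓ)

lemma insertAfter_injective {M M' : Matching m} {ℓ ℓ' : ℕ ⊕ ℕ}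
    (hℓ : ℓ ∈ (Finset.Icc 1 m).disjSum (Finset.Icc 1 m))
    (hℓ' : ℓ' ∈ (Finset.Icc 1 m).disjSum (Finset.Icc 1 m))
    (h : M.insertAfter ℓ = M'.insertAfter ℓ') : ℓ = ℓ' ∧ M = M' := by
  have hM : M = M' := by
    rw [← eraseLast_insertArc M _ (M.insertPos_bounds ℓ),
      ← eraseLast_insertArc M' _ (M'.insertPos_bounds ℓ')]
    exact congrArg eraseLast h
  subst hM
  have hpos : M.insertPos ℓ = M.insertPos ℓ' := by
    have := congrArg (fun M => M.opener (m + 1)) h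
    simpa only [insertAfter, insertArc_opener_last] using this
  refine ⟨?_, rfl⟩
  rcases ℓ with x | y <;> rcases ℓ' with x' | y' <;>
    simp only [Finset.inl_mem_disjSum, Finset.inr_mem_disjSum, Finset.mem_Icc] at hℓ hℓ' <;>
    simp only [insertPos, Nat.add_right_cancel_iff] at hpos
  · exact congrArg _ (M.opener_inj x x' hℓ.1 hℓ.2 hℓ'.1 hℓ'.2 hpos)
  · exact absurd hpos (M.opener_ne_closer x y' hℓ.1 hℓ.2 hℓ'.1 hℓ'.2)
  · exact absurd hpos.symm (M.opener_ne_closer x' y hℓ'.1 hℓ'.2 hℓ.1 hℓ.2)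
  · exact congrArg _ (closer_injective hℓ.1 hℓ.2 hℓ'.1 hℓ'.2 hpos)

/-- If the last arc were opened at `1`, the arc opened at `2` would be nested in it. -/
lemma two_le_opener_last (hm : 1 ≤ m) {M : Matching (m + 1)} (hM : M.NoLeftNesting) :
    2 ≤ M.opener (m + 1) := by
  obtain ⟨ho₁, ho₂⟩ := opener_last_bounds (M := M)
  by_contra h
  rcases isOpener_or_isCloser (M := M) (p := 2) (by omega) (by omega) with
    ⟨j, ⟨hj₁, hj₂⟩, hj⟩ | ⟨j, ⟨hj₁, hj₂⟩, hj⟩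
  · have hjm : j ≠ m + 1 := by rintro rfl; omega
    have := closer_lt_last (M := M) hj₁ (by omega)
    refine hM j (m + 1) hj₁ hj₂ (by omega) le_rfl ⟨by omega, ?_⟩
    rw [closer_last (by omega)]
    omega
  · have := M.opener_lt_closer j hj₁ hj₂
    have := (opener_bounds (M := M) hj₁ hj₂).1
    obtain rfl : j = m + 1 := M.opener_inj j (m + 1) hj₁ hj₂ (by omega) le_rfl (by omega)
    rw [closer_last (by omega)] at hj
    omega

lemma exists_insertAfter_eq (hm : 1 ≤ m) {M : Matching (m + 1)} (hM : M.NoLeftNesting) :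
    ∃ ℓ ∈ (Finset.Icc 1 m).disjSum (Finset.Icc 1 m), M.eraseLast.insertAfter ℓ = M := by
  obtain ⟨ho₁, ho₂⟩ := opener_last_bounds (M := M)
  have ho := two_le_opener_last hm hM
  suffices ∃ ℓ ∈ (Finset.Icc 1 m).disjSum (Finset.Icc 1 m),
      M.eraseLast.insertPos ℓ = M.opener (m + 1) by
    obtain ⟨ℓ, hℓ, hpos⟩ := this
    refine ⟨ℓ, hℓ, (insertArc_congr hpos).trans (insertArc_eraseLast M)⟩
  have hpred : ∀ q, q = M.opener (m + 1) - 1 → M.opener (m + 1) = q + 1 ∧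
      (M.opener (m + 1)).predAbove q = q := fun q hq =>
    ⟨by omega, Nat.predAbove_of_lt (by omega)⟩
  rcases isOpener_or_isCloser (M := M) (p := M.opener (m + 1) - 1) (by omega) (by omega) with
    ⟨i, ⟨hi₁, hi₂⟩, hi⟩ | ⟨i, ⟨hi₁, hi₂⟩, hi⟩
  · have him : i ≠ m + 1 := by rintro rfl; omega
    obtain ⟨ho', hq⟩ := hpred _ hi
    refine ⟨.inl i, Finset.inl_mem_disjSum.mpr (Finset.mem_Icc.mpr ⟨hi₁, by omega⟩), ?_⟩
    rw [insertPos, eraseLast_opener hi₁ (by omega), hq, ho']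
  · have him : i ≠ m + 1 := by rintro rfl; rw [closer_last (by omega)] at hi; omega
    obtain ⟨ho', hq⟩ := hpred _ hi
    refine ⟨.inr i, Finset.inr_mem_disjSum.mpr (Finset.mem_Icc.mpr ⟨hi₁, by omega⟩), ?_⟩
    rw [insertPos, eraseLast_closer hi₁ (by omega), hq, ho']

section Statistics

variable {M : Matching m}

lemma isCloserOrEnd_opener_add_one_iff (hM : M.NoLeftNesting) (hx₁ : 1 ≤ x) (hx₂ : x ≤ m) :
    M.IsCloserOrEnd (M.opener x + 1) ↔ x ∉ M.LcrSet := by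
  have := opener_bounds (M := M) hx₁ hx₂
  rw [LcrSet_eq hM, IsCloserOrEnd]
  simp only [Set.mem_ofPred_eq, hx₁, hx₂, and_self, true_and]
  constructor
  · rintro (hc | he) ho
    exacts [ho.not_isCloser hc, by omega]
  · intro ho
    exact Or.inl ((isOpener_or_isCloser (by omega) (by omega)).resolve_left ho)

lemma isCloserOrEnd_closer_add_one_iff (hy₁ : 1 ≤ y) (hy₂ : y ≤ m) :
    M.IsCloserOrEnd (M.closer y + 1) ↔ y = m ∨ y ∈ M.shiftedRadj := by
  have := closer_bounds (M := M) hy₁ hy₂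
  constructor
  · rintro (⟨c, ⟨hc₁, hc₂⟩, hc⟩ | he)
    · obtain rfl := eq_succ_of_closer_eq_succ hy₁ hy₂ hc₁ hc₂ hc
      exact Or.inr ⟨hy₁, hc₂, hc⟩
    · left
      by_contra hne
      have := closer_lt_last (M := M) hy₁ (by omega)
      omega
  · rintro (rfl | ⟨-, h₂, h₃⟩)
    · exact Or.inr (by rw [closer_last hy₁])
    · exact Or.inl ⟨y + 1, ⟨by omega, h₂⟩, h₃⟩

lemma LcrSet_insertAfter_inl (hM : M.NoLeftNesting) (hx₁ : 1 ≤ x) (hx₂ : x ≤ m)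
    (hval : M.IsCloserOrEnd (M.insertPos (.inl x))) :
    (M.insertAfter (.inl x)).LcrSet = insert x M.LcrSet := by
  rw [insertAfter, LcrSet_insertArc hM hval, Set.union_comm]
  congr 1
  ext i
  simp only [insertPos, Set.mem_ofPred_eq, Nat.add_right_cancel_iff]
  exact ⟨fun ⟨⟨h₁, h₂⟩, he⟩ => M.opener_inj i x h₁ h₂ hx₁ hx₂ he,
    by rintro rfl; exact ⟨⟨hx₁, hx₂⟩, rfl⟩⟩

lemma shiftedLRcr_insertAfter_inl (hm : 1 ≤ m) (hx₁ : 1 ≤ x) (hx₂ : x ≤ m)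
    (hval : M.IsCloserOrEnd (M.insertPos (.inl x))) :
    (M.insertAfter (.inl x)).shiftedLRcr =
      if x = m then insert m M.shiftedLRcr else M.shiftedLRcr := by
  rw [insertAfter, shiftedLRcr_insertArc hm hval]
  have hcl : {y | y ∈ M.shiftedLRcr ∧ M.closer y + 1 ≠ M.insertPos (.inl x)} = M.shiftedLRcr :=
    Set.sep_eq_self_iff_mem_true.mpr fun y ⟨h₁, h₂, _⟩ h =>
      M.opener_ne_closer x y hx₁ hx₂ h₁ (by omega) (by simp only [insertPos] at h; omega)
  rw [hcl]
  simp only [insertPos, Nat.add_right_cancel_iff]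
  split_ifs with hxm
  · subst hxm
    ext y
    simp only [Set.mem_union, Set.mem_ofPred_eq, Set.mem_insert_iff, and_true]
    exact or_comm
  · convert Set.union_empty _
    exact Set.eq_empty_of_forall_notMem fun y ⟨_, he⟩ =>
      hxm (M.opener_inj x m hx₁ hx₂ hm le_rfl he.symm)

lemma LcrSet_insertAfter_inr (hM : M.NoLeftNesting) (hy₁ : 1 ≤ y) (hy₂ : y ≤ m)
    (hval : M.IsCloserOrEnd (M.insertPos (.inr y))) :
    (M.insertAfter (.inr y)).LcrSet = M.LcrSet := by
  rw [insertAfter, LcrSet_insertArc hM hval]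
  convert Set.union_empty _
  exact Set.eq_empty_of_forall_notMem fun i ⟨⟨h₁, h₂⟩, he⟩ =>
    M.opener_ne_closer i y h₁ h₂ hy₁ hy₂ (by simp only [insertPos] at he; omega)

lemma shiftedLRcr_insertAfter_inr (hm : 1 ≤ m) (hy₁ : 1 ≤ y) (hy₂ : y ≤ m)
    (hval : M.IsCloserOrEnd (M.insertPos (.inr y))) :
    (M.insertAfter (.inr y)).shiftedLRcr = M.shiftedLRcr \ {y} := by
  rw [insertAfter, shiftedLRcr_insertArc hm hval]
  simp only [insertPos, Nat.add_right_cancel_iff]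
  have hop : {y' | y' = m ∧ M.opener m = M.closer y} = ∅ :=
    Set.eq_empty_of_forall_notMem fun _ ⟨_, he⟩ => M.opener_ne_closer m y hm le_rfl hy₁ hy₂ he
  rw [hop, Set.union_empty]
  ext y'
  simp only [Set.mem_ofPred_eq, Set.mem_sdiff, Set.mem_singleton_iff]
  refine and_congr_right fun h => ⟨fun hne he => hne (he ▸ rfl), fun hne he => hne ?_⟩
  have := h.2.1
  exact closer_injective (M := M) h.1 (by omega) hy₁ hy₂ (by omega)

end Statistics

def empty : Matching 0 where
  opener _ := 0
  closer _ := 0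
  opener_lt_closer _ h₁ h₂ := by omega
  closer_mono _ _ _ _ h := by omega
  opener_mem _ h₁ h₂ := by omega
  closer_mem _ h₁ h₂ := by omega
  opener_inj _ _ h₁ h₂ := by omega
  opener_ne_closer _ _ h₁ h₂ := by omega
  cover _ hp := by simp only [Set.mem_Icc] at hp; omega
  opener_eq_zero _ _ := rfl
  closer_eq_zero _ _ := rfl

lemma eq_of_size_one (M M' : Matching 1) : M = M' := by
  have h : ∀ M : Matching 1, M.opener 1 = 1 ∧ M.closer 1 = 2 := fun M => by
    have := opener_bounds (M := M) le_rfl le_rfl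
    exact ⟨by omega, closer_last le_rfl⟩
  refine ext (funext fun i => ?_) (funext fun i => ?_) <;> by_cases hi : i = 1
  · rw [hi, (h M).1, (h M').1]
  · rw [M.opener_eq_zero i (by simp only [Set.mem_Icc]; omega),
      M'.opener_eq_zero i (by simp only [Set.mem_Icc]; omega)]
  · rw [hi, (h M).2, (h M').2]
  · rw [M.closer_eq_zero i (by simp only [Set.mem_Icc]; omega),
      M'.closer_eq_zero i (by simp only [Set.mem_Icc]; omega)]

end Insertion

end Matching

section MatchingCount

variable {m n x y : ℕ} {A B : Set ℕ} {M : Matching m}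

def matClass (n : ℕ) (A B : Set ℕ) : Set (Matching n) :=
  {M | M.NoLeftNesting ∧ M.LcrSet \ M.shiftedLRcr = A ∧ M.shiftedLRcr = B}

lemma admissible_of_mem_matClass {M : Matching n} (hM : M ∈ matClass n A B) :
    Admissible n A B := by
  obtain ⟨hM, rfl, rfl⟩ := hM
  refine ⟨fun a ha => ?_, fun b ⟨h₁, h₂, _⟩ => ⟨h₁, h₂⟩, Set.disjoint_sdiff_left⟩
  obtain ⟨h₁, h₂, -⟩ := ha.1
  have hn : a ≠ n := fun h => Matching.last_notMem_LcrSet hM (by omega) (h ▸ ha.1)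
  have hn' : a ≠ n - 1 := fun h => Matching.pred_last_notMem_LcrSet_sdiff hM (by omega) (h ▸ ha)
  omega

lemma ncard_matClass_of_not_admissible (h : ¬ Admissible n A B) : (matClass n A B).ncard = 0 := by
  rw [Set.eq_empty_of_forall_notMem fun M hM => h (admissible_of_mem_matClass hM),
    Set.ncard_empty]

def matInsertionFiber (m : ℕ) (ℓ : ℕ ⊕ ℕ) (A B : Set ℕ) : Set (Matching m) :=
  {M | M ∈ {M : Matching m | M.NoLeftNesting ∧ M.IsCloserOrEnd (M.insertPos ℓ)} ∧
    M.insertAfter ℓ ∈ matClass (m + 1) A B}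

lemma ncard_matClass_succ_eq_sum (hm : 1 ≤ m) :
    (matClass (m + 1) A B).ncard =
      ∑ ℓ ∈ (Finset.Icc 1 m).disjSum (Finset.Icc 1 m), (matInsertionFiber m ℓ A B).ncard := by
  refine ncard_eq_sum_ncard_of_insertion (T := matClass (m + 1) A B) _
    (fun ℓ => {M : Matching m | M.NoLeftNesting ∧ M.IsCloserOrEnd (M.insertPos ℓ)})
    (fun ℓ M => M.insertAfter ℓ) (fun _ _ => Set.toFinite _)
    (fun ℓ hℓ ℓ' hℓ' M _ M' _ h => ?_) (fun M hM => ?_)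
  · exact Matching.insertAfter_injective hℓ hℓ' h
  · obtain ⟨ℓ, hℓ, h⟩ := Matching.exists_insertAfter_eq hm hM.1
    have hpos : M.eraseLast.insertPos ℓ = M.opener (m + 1) := by
      have := congrArg (fun M : Matching (m + 1) => M.opener (m + 1)) h
      simpa only [Matching.insertAfter, Matching.insertArc_opener_last] using this
    refine ⟨ℓ, hℓ, M.eraseLast, ⟨Matching.noLeftNesting_eraseLast hM.1, ?_⟩, h⟩
    rw [hpos]
    exact Matching.isCloserOrEnd_eraseLast hM.1

lemma mem_matInsertionFiber_inl (hm : 1 ≤ m) (hx₁ : 1 ≤ x) (hx₂ : x ≤ m) :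
    M ∈ matInsertionFiber m (.inl x) A B ↔ M.NoLeftNesting ∧ x ∉ M.LcrSet ∧
      insert x M.LcrSet \ (if x = m then insert m M.shiftedLRcr else M.shiftedLRcr) = A ∧
      (if x = m then insert m M.shiftedLRcr else M.shiftedLRcr) = B := by
  constructor
  · rintro ⟨⟨hM, hval⟩, -, hA, hB⟩
    rw [Matching.LcrSet_insertAfter_inl hM hx₁ hx₂ hval,
      Matching.shiftedLRcr_insertAfter_inl hm hx₁ hx₂ hval] at hA
    rw [Matching.shiftedLRcr_insertAfter_inl hm hx₁ hx₂ hval] at hB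
    exact ⟨hM, (Matching.isCloserOrEnd_opener_add_one_iff hM hx₁ hx₂).mp hval, hA, hB⟩
  · rintro ⟨hM, hxL, hA, hB⟩
    have hval := (Matching.isCloserOrEnd_opener_add_one_iff hM hx₁ hx₂).mpr hxL
    refine ⟨⟨hM, hval⟩, Matching.noLeftNesting_insertArc hM hval, ?_, ?_⟩
    · rwa [Matching.LcrSet_insertAfter_inl hM hx₁ hx₂ hval,
        Matching.shiftedLRcr_insertAfter_inl hm hx₁ hx₂ hval]
    · rwa [Matching.shiftedLRcr_insertAfter_inl hm hx₁ hx₂ hval]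

lemma mem_matInsertionFiber_inr (hm : 1 ≤ m) (hy₁ : 1 ≤ y) (hy₂ : y ≤ m) :
    M ∈ matInsertionFiber m (.inr y) A B ↔ M.NoLeftNesting ∧ (y = m ∨ y ∈ M.shiftedRadj) ∧
      M.LcrSet \ (M.shiftedLRcr \ {y}) = A ∧ M.shiftedLRcr \ {y} = B := by
  rw [← Matching.isCloserOrEnd_closer_add_one_iff hy₁ hy₂]
  constructor
  · rintro ⟨⟨hM, hval⟩, -, hA, hB⟩
    rw [Matching.LcrSet_insertAfter_inr hM hy₁ hy₂ hval,
      Matching.shiftedLRcr_insertAfter_inr hm hy₁ hy₂ hval] at hA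
    rw [Matching.shiftedLRcr_insertAfter_inr hm hy₁ hy₂ hval] at hB
    exact ⟨hM, hval, hA, hB⟩
  · rintro ⟨hM, hval, hA, hB⟩
    refine ⟨⟨hM, hval⟩, Matching.noLeftNesting_insertArc hM hval, ?_, ?_⟩
    · rwa [Matching.LcrSet_insertAfter_inr hM hy₁ hy₂ hval,
        Matching.shiftedLRcr_insertAfter_inr hm hy₁ hy₂ hval]
    · rwa [Matching.shiftedLRcr_insertAfter_inr hm hy₁ hy₂ hval]

open Classical in
lemma matInsertionFiber_inl_of_lt (hm : 1 ≤ m) (hx₁ : 1 ≤ x) (hxm : x < m)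
    (hAB : Disjoint A B) :
    matInsertionFiber m (.inl x) A B = if x ∈ A then matClass m (A \ {x}) B else ∅ := by
  ext M
  rw [mem_matInsertionFiber_inl hm hx₁ hxm.le, if_neg hxm.ne]
  constructor
  · rintro ⟨hM, h⟩
    rw [notMem_and_insert_sdiff_eq_and_iff (Matching.shiftedLRcr_subset_LcrSet hM)] at h
    rw [if_pos h.1]
    exact ⟨hM, h.2.2⟩
  · split_ifs with hxA
    · rintro ⟨hM, h⟩
      exact ⟨hM, (notMem_and_insert_sdiff_eq_and_iff (Matching.shiftedLRcr_subset_LcrSet hM)).mpr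
        ⟨hxA, Set.disjoint_left.mp hAB hxA, h⟩⟩
    · exact False.elim

open Classical in
lemma matInsertionFiber_inl_self (hm : 1 ≤ m) :
    matInsertionFiber m (.inl m) A B = if m ∈ B then matClass m A (B \ {m}) else ∅ := by
  ext M
  rw [mem_matInsertionFiber_inl hm hm le_rfl, if_pos rfl]
  constructor
  · rintro ⟨hM, hmL, h⟩
    rw [insert_sdiff_insert_eq_and_iff (Matching.shiftedLRcr_subset_LcrSet hM) hmL] at h
    rw [if_pos h.1]
    exact ⟨hM, h.2⟩
  · split_ifs with hmB
    · rintro ⟨hM, h⟩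
      have hmL := Matching.last_notMem_LcrSet hM hm
      exact ⟨hM, hmL, (insert_sdiff_insert_eq_and_iff (Matching.shiftedLRcr_subset_LcrSet hM)
        hmL).mpr ⟨hmB, h⟩⟩
    · exact False.elim

open Classical in
lemma matInsertionFiber_inr (hm : 1 ≤ m) (hy₁ : 1 ≤ y) (hy₂ : y ≤ m) (hAB : Disjoint A B) :
    matInsertionFiber m (.inr y) A B =
      (if y ∈ A then matClass m (A \ {y}) (insert y B) else ∅) ∪
        {M | M ∈ matClass m A B ∧ y ∉ B ∧ (y = m ∨ y ∈ M.shiftedRadj)} := by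
  ext M
  rw [mem_matInsertionFiber_inr hm hy₁ hy₂, Set.mem_union, Set.mem_ofPred_eq]
  constructor
  · rintro ⟨hM, hval, h⟩
    rw [sdiff_sdiff_singleton_eq_and_iff (Matching.shiftedLRcr_subset_LcrSet hM)] at h
    rcases h with ⟨hyA, -, hA, hB⟩ | ⟨hA, hB, hyB⟩
    · rw [if_pos hyA]
      exact Or.inl ⟨hM, hA, hB⟩
    · exact Or.inr ⟨⟨hM, hA, hB⟩, hyB, hval⟩
  · rintro (h | ⟨⟨hM, hA, hB⟩, hyB, hval⟩)
    · split_ifs at h with hyA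
      swap; · exact h.elim
      obtain ⟨hM, hA, hB⟩ := h
      have hyS : y ∈ M.shiftedLRcr := hB ▸ Set.mem_insert y B
      refine ⟨hM, Or.inr (M.shiftedLRcr_subset_shiftedRadj hyS), ?_⟩
      exact (sdiff_sdiff_singleton_eq_and_iff (Matching.shiftedLRcr_subset_LcrSet hM)).mpr
        (Or.inl ⟨hyA, Set.disjoint_left.mp hAB hyA, hA, hB⟩)
    · exact ⟨hM, hval, (sdiff_sdiff_singleton_eq_and_iff
        (Matching.shiftedLRcr_subset_LcrSet hM)).mpr (Or.inr ⟨hA, hB, hyB⟩)⟩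

lemma ncard_insertionLabels_inr (hM : M ∈ matClass m A B) :
    {y | y ∉ B ∧ (y = m ∨ y ∈ M.shiftedRadj)}.ncard = A.ncard + 1 := by
  obtain ⟨hM, rfl, rfl⟩ := hM
  have hmB : m ∉ M.shiftedLRcr := fun ⟨_, h, _⟩ => by omega
  have hR : M.shiftedRadj.Finite :=
    (Set.finite_Icc 1 m).subset fun y ⟨h₁, h₂, _⟩ => ⟨h₁, by omega⟩
  have hset : {y | y ∉ M.shiftedLRcr ∧ (y = m ∨ y ∈ M.shiftedRadj)} =
      insert m (M.shiftedRadj \ M.shiftedLRcr) := by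
    ext y
    simp only [Set.mem_ofPred_eq, Set.mem_insert_iff, Set.mem_sdiff]
    constructor
    · rintro ⟨hyB, rfl | hy⟩
      exacts [Or.inl rfl, Or.inr ⟨hy, hyB⟩]
    · rintro (rfl | ⟨hy, hyB⟩)
      exacts [⟨hmB, Or.inl rfl⟩, ⟨hyB, Or.inr hy⟩]
  have hmR : m ∉ M.shiftedRadj \ M.shiftedLRcr := fun ⟨⟨_, h, _⟩, _⟩ => by omega
  rw [hset, Set.ncard_insert_of_notMem hmR hR.sdiff, Set.ncard_sdiff
    M.shiftedLRcr_subset_shiftedRadj (hR.subset M.shiftedLRcr_subset_shiftedRadj),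
    Matching.ncard_shiftedRadj hM, Set.ncard_sdiff (Matching.shiftedLRcr_subset_LcrSet hM)
    ((hR.subset M.shiftedLRcr_subset_shiftedRadj))]

open Classical in
lemma ncard_matInsertionFiber_inr (hm : 1 ≤ m) (hy₁ : 1 ≤ y) (hy₂ : y ≤ m)
    (hAB : Disjoint A B) :
    (matInsertionFiber m (.inr y) A B).ncard =
      (if y ∈ A then (matClass m (A \ {y}) (insert y B)).ncard else 0) +
        {M | M ∈ matClass m A B ∧ y ∈ {z | z ∉ B ∧ (z = m ∨ z ∈ M.shiftedRadj)}}.ncard := by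
  rw [matInsertionFiber_inr hm hy₁ hy₂ hAB, Set.ncard_union_eq, apply_ite Set.ncard,
    Set.ncard_empty]
  · rfl
  · refine Set.disjoint_left.mpr fun M h ⟨⟨_, _, hB⟩, hyB, _⟩ => ?_
    split_ifs at h
    exacts [hyB (hB ▸ h.2.2 ▸ Set.mem_insert y B), h]

open Classical in
theorem ncard_matClass_succ (hm : 1 ≤ m) (hAB : Admissible (m + 1) A B) :
    (matClass (m + 1) A B).ncard = recStep (fun A B => (matClass m A B).ncard) m A B := by
  have hIcc : Finset.Icc 1 m = insert m (Finset.Ico 1 m) := by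
    ext x; simp only [Finset.mem_Icc, Finset.mem_insert, Finset.mem_Ico]; omega
  have hmA : m ∉ A := fun h => by have := hAB.1 m h; omega
  have hA : A ⊆ ↑(Finset.Ico 1 m) := fun a ha => by
    have := hAB.1 a ha; simp only [Finset.coe_Ico, Set.mem_Ico]; omega
  have hcount := sum_ncard_setOf_mem_eq_mul (Set.toFinite (matClass m A B)) (F := Finset.Icc 1 m)
    (R := fun M => {y | y ∉ B ∧ (y = m ∨ y ∈ M.shiftedRadj)})
    (fun M _ y ⟨_, hy⟩ => by
      simp only [Finset.coe_Icc, Set.mem_Icc]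
      rcases hy with rfl | ⟨h₁, h₂, _⟩ <;> constructor <;> omega)
    (fun M hM => ncard_insertionLabels_inr hM)
  rw [ncard_matClass_succ_eq_sum hm, Finset.sum_disjSum,
    Finset.sum_congr rfl fun y hy => ncard_matInsertionFiber_inr hm (Finset.mem_Icc.mp hy).1
      (Finset.mem_Icc.mp hy).2 hAB.2.2, Finset.sum_add_distrib, hcount, hIcc,
    Finset.sum_insert Finset.right_notMem_Ico, Finset.sum_insert Finset.right_notMem_Ico,
    matInsertionFiber_inl_self hm, if_neg hmA,
    Finset.sum_congr rfl fun x hx => by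
      rw [matInsertionFiber_inl_of_lt hm (Finset.mem_Ico.mp hx).1 (Finset.mem_Ico.mp hx).2
        hAB.2.2, apply_ite Set.ncard, Set.ncard_empty],
    recStep, apply_ite Set.ncard, Set.ncard_empty, add_mul, one_mul,
    ← sum_ite_mem_eq_ncard_mul hA]
  simp only [ite_add_zero, Finset.sum_add_distrib]
  ring

lemma ncard_matClass_one : (matClass 1 ∅ ∅).ncard = 1 := by
  have hmem : ∀ M : Matching 1, M ∈ matClass 1 ∅ ∅ := fun M => by
    have hL : M.LcrSet = ∅ := Set.eq_empty_of_forall_notMem fun i ⟨h₁, h₂, j, hj₁, hj₂, hj, _⟩ => by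
      obtain rfl : i = 1 := by omega
      obtain rfl : j = 1 := by omega
      omega
    have hS : M.shiftedLRcr = ∅ := Set.eq_empty_of_forall_notMem fun y ⟨h₁, h₂, _⟩ => by omega
    refine ⟨fun i j hi₁ hi₂ hj₁ hj₂ ⟨h, _⟩ => ?_, by rw [hL, Set.empty_sdiff], hS⟩
    obtain rfl : i = 1 := by omega
    obtain rfl : j = 1 := by omega
    omega
  exact Set.ncard_eq_one.mpr ⟨Matching.empty.insertArc 1 ⟨le_rfl, le_rfl⟩,
    Set.eq_singleton_iff_unique_mem.mpr ⟨hmem _, fun M _ => Matching.eq_of_size_one _ _⟩⟩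

end MatchingCount

theorem ascbottoms_vs_leftcrossings_general (n : ℕ) (hn : 1 ≤ n) (A B : Set ℕ) :
    Set.ncard {f : ℕ → ℕ | IsPermOn n f ∧ permAscBottomProper n f = A ∧
        (fun a => a - 1) '' permAdjAsc n f = B} =
      Set.ncard {M : Matching n | M.NoLeftNesting ∧
        M.LcrSet \ (fun i => i - 1) '' M.LRcrSet = A ∧
        (fun i => i - 1) '' M.LRcrSet = B} := by
  have key := eq_of_recStep (c := fun n A B => (permClass n A B).ncard)
    (d := fun n A B => (matClass n A B).ncard)
    (fun _ _ _ => ncard_permClass_of_not_admissible) (fun _ _ _ => ncard_matClass_of_not_admissible)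
    (fun _ hm _ _ => ncard_permClass_succ hm) (fun _ hm _ _ => ncard_matClass_succ hm)
    (ncard_permClass_one.trans ncard_matClass_one.symm) n hn
  simp only [image_pred_permAdjAsc, Matching.image_pred_LRcrSet]
  exact congrFun (congrFun key A) B

/-- Position-refined equidistribution of long ascent bottoms and
(shifted) short ascents on permutations with single left crossings and (shifted)
double crossings on matchings without left nestings. -/
theorem ascbottoms_vs_leftcrossings (n : ℕ) (hn : 1 ≤ n) (A B : Set ℕ)
    (hA : A ⊆ Set.Icc 1 n) (hB : B ⊆ Set.Icc 1 n) (hAB : Disjoint A B) :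
    Set.ncard {f : ℕ → ℕ | IsPermOn n f ∧ permAscBottomProper n f = A ∧
        (fun a => a - 1) '' permAdjAsc n f = B} =
      Set.ncard {M : Matching n | M.NoLeftNesting ∧
        M.LcrSet \ (fun i => i - 1) '' M.LRcrSet = A ∧
        (fun i => i - 1) '' M.LRcrSet = B} :=
  ascbottoms_vs_leftcrossings_general n hn A B
end
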